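/- arXiv:1408.4086 — 9 statements merged into one kernel-verified Lean document; each statement's English description precedes it below -/
import Mathlib

section
/- Let A be a finite alphabet and n ≥ 1. Suppose f, g : ℤ → A are periodic functions, each with (some) period at most n/2, and f(m) = g(m) for all m in an interval of length n (say m = 0, 1, ..., n−1). Then f = g. -/
/-- Fine–Wilf consequence: two bi-infinite sequences with periods at most `n/2`
that agree on an interval of length `n` are equal. -/
theorem stmt3 {A : Type*} [Finite A] (n : ℕ) (hn : 1 ≤ n) (f g : ℤ → A)
    (p q : ℕ) (hp : 0 < p) (hq : 0 < q) (hpn : 2 * p ≤ n) (hqn : 2 * q ≤ n)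
    (hfp : ∀ m : ℤ, f (m + p) = f m) (hgq : ∀ m : ℤ, g (m + q) = g m)
    (hagree : ∀ m : ℤ, 0 ≤ m → m < n → f m = g m) :
    f = g := by
  have hfp' : ∀ m : ℤ, f (m - p) = f m := by
    intro m; have h := hfp (m - p); rw [sub_add_cancel] at h; exact h.symm
  have hgq' : ∀ m : ℤ, g (m - q) = g m := by
    intro m; have h := hgq (m - q); rw [sub_add_cancel] at h; exact h.symm
  -- agreement on all nonnegative integers
  have key : ∀ N : ℕ, ∀ m : ℤ, 0 ≤ m → m ≤ N → f m = g m := by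
    intro N
    induction N with
    | zero => intro m h0 h1; exact hagree m h0 (by omega)
    | succ N IH =>
      intro m h0 h1
      by_cases hm : m ≤ N
      · exact IH m h0 hm
      · by_cases hmn : m < n
        · exact hagree m h0 hmn
        · -- m ≥ n ≥ p + q
          have hpq : (p : ℤ) + q ≤ m := by push_cast at hmn ⊢; omega
          calc f m = f (m - p) := (hfp' m).symm
            _ = g (m - p) := IH (m - p) (by omega) (by omega)
            _ = g (m - p - q) := (hgq' (m - p)).symm
            _ = f (m - p - q) := (IH (m - p - q) (by omega) (by omega)).symm
            _ = f (m - q) := by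
                have h := hfp (m - p - q)
                rw [show m - p - q + p = m - q by ring] at h; exact h.symm
            _ = g (m - q) := IH (m - q) (by omega) (by omega)
            _ = g m := hgq' m
  have key' : ∀ m : ℤ, 0 ≤ m → f m = g m := fun m hm =>
    key m.toNat m hm (by omega)
  -- extend to negative integers
  have key2 : ∀ N : ℕ, ∀ m : ℤ, -(N : ℤ) ≤ m → f m = g m := by
    intro N
    induction N with
    | zero => intro m h0; exact key' m (by omega)
    | succ N IH =>
      intro m h0
      by_cases hm : -(N : ℤ) ≤ m
      · exact IH m hm
      · have hm' : m = -(N : ℤ) - 1 := by push_cast at h0 ⊢; omega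
        have hp1 : -(N : ℤ) ≤ m + p := by omega
        have hq1 : -(N : ℤ) ≤ m + q := by omega
        have hpq1 : -(N : ℤ) ≤ m + p + q := by omega
        calc f m = f (m + p) := (hfp m).symm
          _ = g (m + p) := IH (m + p) hp1
          _ = g (m + p + q) := (hgq (m + p)).symm
          _ = f (m + p + q) := (IH (m + p + q) hpq1).symm
          _ = f (m + q) := by
              have h := hfp (m + q)
              rw [show m + q + p = m + p + q by ring] at h; exact h
          _ = g (m + q) := IH (m + q) hq1
          _ = g m := hgq m
  funext m
  exact key2 (-m).toNat m (by omega)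
end

section
/- Let A be a finite alphabet, k > n ≥ 1, and u ∈ A^k a word of length k. For 1 ≤ m ≤ n, let W'_m(u) denote the set of length-m subwords of u starting at positions i with 1 ≤ i ≤ k − n + 1. If |W'_n(u)| ≤ n and it is not the case that u_t is a single constant symbol for all t ∈ [1, k−n+1], then there exists m < n such that every word in W'_m(u) has a unique right extension in W'_{m+1}(u). -/
/-- `Wsub u k n m` is the set of length-`m` subwords of the word `u` (of length `k`,
indexed by positions `1, ..., k`) starting at positions `i` with `1 ≤ i ≤ k - n + 1`. -/
def Wsub {A : Type*} (u : ℕ → A) (k n m : ℕ) : Set (Fin m → A) :=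
  {w | ∃ i : ℕ, 1 ≤ i ∧ i ≤ k - n + 1 ∧ ∀ t : Fin m, w t = u (i + (t : ℕ))}

/-- Every word in `W'_m(u)` has at least one right extension. -/
lemma Wsub.snoc_mem {A : Type*} {u : ℕ → A} {k n m : ℕ} {w : Fin m → A} {i : ℕ}
    (h1 : 1 ≤ i) (h2 : i ≤ k - n + 1) (hw : ∀ t : Fin m, w t = u (i + (t : ℕ))) :
    Fin.snoc w (u (i + m)) ∈ Wsub u k n (m + 1) := by
  refine ⟨i, h1, h2, fun t => ?_⟩
  refine Fin.lastCases ?_ (fun j => ?_) t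
  · simp [Fin.snoc_last]
  · simp [Fin.snoc_castSucc, hw j]

/-- The restriction map sends `W'_{m+1}(u)` onto `W'_m(u)`. -/
lemma Wsub.image_restrict {A : Type*} (u : ℕ → A) (k n m : ℕ) :
    (fun v : Fin (m + 1) → A => fun j : Fin m => v j.castSucc) '' Wsub u k n (m + 1)
      = Wsub u k n m := by
  ext w
  constructor
  · rintro ⟨v, ⟨i, h1, h2, hv⟩, rfl⟩
    exact ⟨i, h1, h2, fun t => by simpa using hv t.castSucc⟩
  · rintro ⟨i, h1, h2, hw⟩
    refine ⟨Fin.snoc w (u (i + m)), Wsub.snoc_mem h1 h2 hw, ?_⟩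
    funext j
    simp [Fin.snoc_castSucc]

/-- If `u` has at most `n` distinct length-`n` subwords (starting at positions in
`[1, k-n+1]`) and `u` is not constant on `[1, k-n+1]`, then for some `m < n` every word in
`W'_m(u)` has a unique right extension in `W'_{m+1}(u)`. -/
theorem stmt4 {A : Type*} [Finite A] (n k : ℕ) (hn : 1 ≤ n) (hk : n < k) (u : ℕ → A)
    (hcard : (Wsub u k n n).ncard ≤ n)
    (hnotconst : ¬ ∃ b : A, ∀ t, 1 ≤ t → t ≤ k - n + 1 → u t = b) :
    ∃ m < n, ∀ w ∈ Wsub u k n m, ∃! a : A, Fin.snoc w a ∈ Wsub u k n (m + 1) := by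
  by_contra hcon
  push_neg at hcon
  -- From the negation: for each m < n, some word has two distinct extensions.
  have hstep : ∀ m, m < n → (Wsub u k n m).ncard < (Wsub u k n (m + 1)).ncard := by
    intro m hm
    obtain ⟨w, hw, hnu⟩ := hcon m hm
    obtain ⟨i, h1, h2, hwi⟩ := hw
    have hext : Fin.snoc w (u (i + m)) ∈ Wsub u k n (m + 1) := Wsub.snoc_mem h1 h2 hwi
    -- get two distinct extensions
    have h2ext : ∃ a b : A, a ≠ b ∧ Fin.snoc w a ∈ Wsub u k n (m + 1) ∧
        Fin.snoc w b ∈ Wsub u k n (m + 1) := by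
      by_contra hab
      push_neg at hab
      exact hnu ⟨u (i + m), hext, fun b hb => by
        by_contra hne
        exact (hab b (u (i + m)) hne hb hext).elim⟩
    obtain ⟨a, b, hab, ha, hb⟩ := h2ext
    set r : (Fin (m + 1) → A) → (Fin m → A) := fun v j => v j.castSucc with hr
    have himg := Wsub.image_restrict u k n m
    have hle : (Wsub u k n m).ncard ≤ (Wsub u k n (m + 1)).ncard := by
      rw [← himg]; exact Set.ncard_image_le (Set.toFinite _)
    rcases lt_or_eq_of_le hle with h | h
    · exact h
    · exfalso
      have hinj : Set.InjOn r (Wsub u k n (m + 1)) :=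
        Set.injOn_of_ncard_image_eq (by rw [himg, h]) (Set.toFinite _)
      have heq : r (Fin.snoc w a) = r (Fin.snoc w b) := by
        funext j
        simp [hr, Fin.snoc_castSucc]
      have := congrFun (hinj ha hb heq) (Fin.last m)
      simp [Fin.snoc_last] at this
      exact hab this
  -- base case: at least two words of length 1
  have h1le : 1 ≤ k - n + 1 := le_add_self
  push_neg at hnotconst
  obtain ⟨t, ht1, ht2, htne⟩ := hnotconst (u 1)
  have hbase : 2 ≤ (Wsub u k n 1).ncard := by
    show 1 < _
    rw [Set.one_lt_ncard_iff (Set.toFinite _)]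
    refine ⟨fun _ => u t, fun _ => u 1, ⟨t, ht1, ht2, fun s => by simp [Fin.eq_zero s]⟩,
      ⟨1, le_refl 1, h1le, fun s => by simp [Fin.eq_zero s]⟩, ?_⟩
    intro h
    exact htne (congrFun h 0)
  -- induction: m + 1 ≤ ncard (Wsub u k n m) for 1 ≤ m ≤ n
  have hind : ∀ m, 1 ≤ m → m ≤ n → m + 1 ≤ (Wsub u k n m).ncard := by
    intro m
    induction m with
    | zero => omega
    | succ p ih =>
      intro _ hpn
      rcases Nat.eq_zero_or_pos p with hp | hp
      · subst hp; simpa using hbase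
      · have h1 := ih hp (by omega)
        have h2 := hstep p (by omega)
        omega
  have := hind n hn le_rfl
  omega
end

section
/- Let A be a finite alphabet, n ≥ 1 and k > 3n, and let u ∈ A^k be a word of length k such that the number of distinct length-n subwords of u equals j ≤ n. Then the subword u[n, k−n] is periodic with period at most j. -/
lemma wsub_image {A : Type*} (u : ℕ → A) (k n : ℕ) {m m' : ℕ} (h : m ≤ m') :
    (fun w : Fin m' → A => fun t : Fin m => w (Fin.castLE h t)) '' Wsub u k n m'
      = Wsub u k n m := by
  ext w
  constructor
  · rintro ⟨w', ⟨i, h1, h2, h3⟩, rfl⟩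
    exact ⟨i, h1, h2, fun t => h3 (Fin.castLE h t)⟩
  · rintro ⟨i, h1, h2, h3⟩
    refine ⟨fun t => u (i + t), ⟨i, h1, h2, fun t => rfl⟩, ?_⟩
    funext t; exact (h3 t).symm

lemma wsub_ncard_mono {A : Type*} [Finite A] (u : ℕ → A) (k n : ℕ) {m m' : ℕ} (h : m ≤ m') :
    (Wsub u k n m).ncard ≤ (Wsub u k n m').ncard := by
  calc (Wsub u k n m).ncard
      = ((fun w : Fin m' → A => fun t : Fin m => w (Fin.castLE h t)) '' Wsub u k n m').ncard := by
        rw [wsub_image]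
    _ ≤ (Wsub u k n m').ncard := Set.ncard_image_le (Set.toFinite _)

/-- Unique right extension when the complexity does not grow from `m` to `m+1`. -/
lemma wsub_ext {A : Type*} [Finite A] (u : ℕ → A) (k n m : ℕ)
    (hcard : (Wsub u k n m).ncard = (Wsub u k n (m+1)).ncard)
    {i i' : ℕ} (hi1 : 1 ≤ i) (hi2 : i ≤ k - n + 1) (hi'1 : 1 ≤ i') (hi'2 : i' ≤ k - n + 1)
    (h : ∀ t < m, u (i + t) = u (i' + t)) : u (i + m) = u (i' + m) := by
  set f : (Fin (m+1) → A) → (Fin m → A) :=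
    fun w t => w (Fin.castLE (Nat.le_succ m) t) with hf
  have himg := wsub_image u k n (Nat.le_succ m)
  have hinj : Set.InjOn f (Wsub u k n (m+1)) := by
    apply Set.injOn_of_ncard_image_eq ?_ (Set.toFinite _)
    rw [← hf] at himg
    rw [himg, hcard]
  have hw1 : (fun t : Fin (m+1) => u (i + (t : ℕ))) ∈ Wsub u k n (m+1) :=
    ⟨i, hi1, hi2, fun t => rfl⟩
  have hw2 : (fun t : Fin (m+1) => u (i' + (t : ℕ))) ∈ Wsub u k n (m+1) :=
    ⟨i', hi'1, hi'2, fun t => rfl⟩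
  have hfw : f (fun t : Fin (m+1) => u (i + (t : ℕ)))
      = f (fun t : Fin (m+1) => u (i' + (t : ℕ))) := by
    funext t
    exact h t t.isLt
  have heq := hinj hw1 hw2 hfw
  have := congrFun heq (Fin.last m)
  simpa using this

/-- Propagation of a repetition using unique right extension. -/
lemma wsub_prop {A : Type*} [Finite A] (u : ℕ → A) (k n m : ℕ)
    (hcard : (Wsub u k n m).ncard = (Wsub u k n (m+1)).ncard)
    {a b : ℕ} (ha : 1 ≤ a) (hab : a < b)
    (hstart : ∀ t < m, u (a + t) = u (b + t)) :
    ∀ s, b + s ≤ k - n + 1 → ∀ t < m, u (a + s + t) = u (b + s + t) := by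
  intro s
  induction s with
  | zero => intro _ t ht; simpa using hstart t ht
  | succ s ih =>
    intro hs t ht
    have hs' : b + s ≤ k - n + 1 := by omega
    have hprev := ih hs'
    rcases Nat.lt_or_ge (t+1) m with h | h
    · have h1 : a + (s+1) + t = a + s + (t+1) := by omega
      have h2 : b + (s+1) + t = b + s + (t+1) := by omega
      rw [h1, h2]
      exact hprev (t+1) h
    · have htm : t + 1 = m := by omega
      have := wsub_ext u k n m hcard (i := a + s) (i' := b + s)
        (by omega) (by omega) (by omega) hs' hprev
      have h1 : a + (s+1) + t = a + s + m := by omega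
      have h2 : b + (s+1) + t = b + s + m := by omega
      rw [h1, h2, this]

/-- If `k > 3n` and the word `u` of length `k` has exactly `j ≤ n` distinct length-`n`
subwords, then `u[n, k-n]` is periodic with period at most `j`. -/
theorem stmt5 {A : Type*} [Finite A] (n k j : ℕ) (hn : 1 ≤ n) (hk : 3 * n < k) (u : ℕ → A)
    (hj : (Wsub u k n n).ncard = j) (hjn : j ≤ n) :
    ∃ p : ℕ, 1 ≤ p ∧ p ≤ j ∧ ∀ i : ℕ, n ≤ i → i + p ≤ k - n → u (i + p) = u i := by
  have hfin : ∀ m, (Wsub u k n m).Finite := fun m => Set.toFinite _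
  have hne : ∀ m, (Wsub u k n m).Nonempty := fun m =>
    ⟨fun t => u (1 + (t : ℕ)), ⟨1, le_rfl, by omega, fun t => rfl⟩⟩
  have hpos : ∀ m, 1 ≤ (Wsub u k n m).ncard := fun m =>
    (Set.ncard_pos (hfin m)).mpr (hne m)
  have hj1 : 1 ≤ j := by
    have := hpos n; omega
  by_cases h1 : (Wsub u k n 1).ncard = 1
  · -- constant on the window, period 1
    obtain ⟨w, hw⟩ := Set.ncard_eq_one.mp h1
    refine ⟨1, le_rfl, hj1, fun i hni hik => ?_⟩
    have hmem1 : (fun t : Fin 1 => u (i + (t : ℕ))) ∈ Wsub u k n 1 :=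
      ⟨i, by omega, by omega, fun t => rfl⟩
    have hmem2 : (fun t : Fin 1 => u (i + 1 + (t : ℕ))) ∈ Wsub u k n 1 :=
      ⟨i + 1, by omega, by omega, fun t => rfl⟩
    rw [hw] at hmem1 hmem2
    have := hmem1.trans hmem2.symm
    have := congrFun this 0
    simpa using this.symm
  · -- complexity must stall somewhere below n
    have key : ∃ m, 1 ≤ m ∧ m < n ∧ (Wsub u k n m).ncard = (Wsub u k n (m+1)).ncard := by
      by_contra hcon
      push_neg at hcon
      have step : ∀ m, 1 ≤ m → m ≤ n → m + 1 ≤ (Wsub u k n m).ncard := by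
        intro m
        induction m with
        | zero => omega
        | succ m ih =>
          intro _ hmn
          rcases Nat.eq_zero_or_pos m with rfl | hm
          · have := hpos 1
            have hz : (Wsub u k n (0+1)).ncard = (Wsub u k n 1).ncard := by norm_num
            have hz1 : h1 = h1 := rfl
            show 0 + 1 + 1 ≤ (Wsub u k n (0+1)).ncard
            omega
          · have hge := ih hm (by omega)
            have hne' := hcon m hm (by omega)
            have hle : (Wsub u k n m).ncard ≤ (Wsub u k n (m+1)).ncard :=
              wsub_ncard_mono u k n (Nat.le_succ m)
            show m + 1 + 1 ≤ (Wsub u k n (m+1)).ncard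
            omega
      have := step n hn le_rfl
      omega
    obtain ⟨m, hm1, hmn, hcard⟩ := key
    -- pigeonhole on positions 1..j+1
    have hjm : (Wsub u k n m).ncard ≤ j := by
      rw [← hj]; exact wsub_ncard_mono u k n (le_of_lt hmn)
    classical
    set F := (hfin m).toFinset with hF
    have hmaps : ∀ i ∈ Finset.Icc 1 (j+1), (fun t : Fin m => u (i + (t : ℕ))) ∈ F := by
      intro i hi
      rw [Finset.mem_Icc] at hi
      rw [hF, Set.Finite.mem_toFinset]
      exact ⟨i, by omega, by omega, fun t => rfl⟩
    have hcardlt : F.card < (Finset.Icc 1 (j+1)).card := by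
      rw [Nat.card_Icc]
      have : F.card = (Wsub u k n m).ncard := (Set.ncard_eq_toFinset_card _ (hfin m)).symm
      omega
    obtain ⟨a, ha, b, hb, hab, heq⟩ :=
      Finset.exists_ne_map_eq_of_card_lt_of_maps_to hcardlt hmaps
    rw [Finset.mem_Icc] at ha hb
    -- WLOG a < b
    wlog hlt : a < b generalizing a b
    · exact this b hb a ha hab.symm heq.symm (by omega)
    have hstart : ∀ t < m, u (a + t) = u (b + t) := by
      intro t ht
      have := congrFun heq ⟨t, ht⟩
      simpa using this
    refine ⟨b - a, by omega, by omega, fun i hni hik => ?_⟩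
    have hia : a ≤ i := by omega
    have hprop := wsub_prop u k n m hcard (by omega) hlt hstart (i - a)
      (by omega) 0 (by omega)
    have h1 : a + (i - a) + 0 = i := by omega
    have h2 : b + (i - a) + 0 = i + (b - a) := by omega
    rw [h1, h2] at hprop
    exact hprop.symm
end

section
/- For a word u of length k > n over a finite alphabet A, if |W_n(u)| = j (the number of distinct length-n subwords), and every length-n subword of u starting at a position in [1, k−2n] extends uniquely to the right (i.e., u[i+1, i+n] is determined by u[i, i+n−1] for i ∈ [1, k−2n]), then there exist 1 ≤ t₁ < t₂ ≤ j+1 with u[t₁, t₁+n−1] = u[t₂, t₂+n−1], and consequently u[t₁, k−n] is periodic with period t₂ − t₁ ≤ j. -/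
/-! Two equal windows at positions `t₁ < t₂` stay equal when shifted to the right, as long as
unique right extension applies; so the word is `(t₂ - t₁)`-periodic from `t₁` up to the last
position covered by such windows. That two of the first `j + 1` windows coincide is the
pigeonhole principle. -/

section Windows

variable {A : Type*}

def UniqueRightExtension (u : ℕ → A) (n L : ℕ) : Prop :=
  ∀ i i' : ℕ, 1 ≤ i → i ≤ L → 1 ≤ i' → i' ≤ L →
    (∀ t < n, u (i + t) = u (i' + t)) → ∀ t < n, u (i + 1 + t) = u (i' + 1 + t)

theorem exists_lt_windows_eq_of_ncard_lt [Finite A] {u : ℕ → A} {k n m : ℕ}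
    (hcard : (Wsub u k n n).ncard < m) (hm : m ≤ k - n + 1) :
    ∃ t₁ t₂ : ℕ, 1 ≤ t₁ ∧ t₁ < t₂ ∧ t₂ ≤ m ∧ ∀ t < n, u (t₁ + t) = u (t₂ + t) := by
  have hIcc : (Set.Icc 1 m).ncard = m := by simp [Set.ncard_eq_toFinset_card']
  obtain ⟨a, ha, b, hb, hab, hwin⟩ := Set.exists_ne_map_eq_of_ncard_lt_of_maps_to
    (hIcc ▸ hcard) (f := fun i (t : Fin n) => u (i + t))
    fun i hi => (⟨i, hi.1, by grind, fun _ => rfl⟩ : _ ∈ Wsub u k n n)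
  have hwin' : ∀ t < n, u (a + t) = u (b + t) := fun t ht => congrFun hwin ⟨t, ht⟩
  rcases Nat.lt_or_gt_of_ne hab with h | h
  · exact ⟨a, b, ha.1, h, hb.2, hwin'⟩
  · exact ⟨b, a, hb.1, h, ha.2, fun t ht => (hwin' t ht).symm⟩

theorem UniqueRightExtension.windows_eq_add {u : ℕ → A} {n L t₁ t₂ : ℕ}
    (huniq : UniqueRightExtension u n L) (h₁ : 1 ≤ t₁) (h₂ : 1 ≤ t₂)
    (hwin : ∀ t < n, u (t₁ + t) = u (t₂ + t)) (m : ℕ) (hm₁ : t₁ + m ≤ L + 1)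
    (hm₂ : t₂ + m ≤ L + 1) : ∀ t < n, u (t₁ + m + t) = u (t₂ + m + t) := by
  induction m with
  | zero => simpa using hwin
  | succ m ih =>
    simpa only [← add_assoc] using
      huniq (t₁ + m) (t₂ + m) (by omega) (by omega) (by omega) (by omega) (ih (by omega) (by omega))

theorem UniqueRightExtension.apply_add_sub_eq {u : ℕ → A} {n L t₁ t₂ : ℕ}
    (huniq : UniqueRightExtension u n L) (hn : 1 ≤ n) (h₁ : 1 ≤ t₁) (h₁₂ : t₁ < t₂)
    (h₂ : t₂ ≤ L + 1) (hwin : ∀ t < n, u (t₁ + t) = u (t₂ + t)) (i : ℕ) (hi : t₁ ≤ i)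
    (hiL : i + (t₂ - t₁) ≤ L + n) : u (i + (t₂ - t₁)) = u i := by
  -- shift the windows as far as allowed, then read off the letter inside the window
  set m := min (i - t₁) (L + 1 - t₂)
  have h := huniq.windows_eq_add h₁ (by omega) hwin m (by omega) (by omega) (i - t₁ - m) (by omega)
  rw [show t₁ + m + (i - t₁ - m) = i by omega,
    show t₂ + m + (i - t₁ - m) = i + (t₂ - t₁) by omega] at h
  exact h.symm

end Windows

/-- If `u` (of length `k > 3n`) has `j ≤ n` distinct length-`n` subwords and each length-`n`
subword starting at a position in `[1, k-2n]` extends uniquely to the right, then two of the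
windows starting at positions `1, ..., j+1` coincide, and consequently `u[t₁, k-n]` is
periodic with period `t₂ - t₁ ≤ j`. -/
theorem stmt6 {A : Type*} [Finite A] (n k j : ℕ) (hn : 1 ≤ n) (hk : 3 * n < k) (u : ℕ → A)
    (hj : (Wsub u k n n).ncard = j) (hjn : j ≤ n)
    (huniq : ∀ i i' : ℕ, 1 ≤ i → i ≤ k - 2 * n → 1 ≤ i' → i' ≤ k - 2 * n →
      (∀ t < n, u (i + t) = u (i' + t)) → ∀ t < n, u (i + 1 + t) = u (i' + 1 + t)) :
    ∃ t₁ t₂ : ℕ, 1 ≤ t₁ ∧ t₁ < t₂ ∧ t₂ ≤ j + 1 ∧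
      (∀ t < n, u (t₁ + t) = u (t₂ + t)) ∧ t₂ - t₁ ≤ j ∧
      ∀ i : ℕ, t₁ ≤ i → i + (t₂ - t₁) ≤ k - n → u (i + (t₂ - t₁)) = u i := by
  obtain ⟨t₁, t₂, h₁, h₁₂, h₂, hwin⟩ :=
    exists_lt_windows_eq_of_ncard_lt (u := u) (k := k) (n := n) (m := j + 1) (by omega) (by omega)
  have huniq' : UniqueRightExtension u n (k - 2 * n) := huniq
  exact ⟨t₁, t₂, h₁, h₁₂, h₂, hwin, by omega, fun i hi hik =>
    huniq'.apply_add_sub_eq hn h₁ h₁₂ (by omega) hwin i hi (by omega)⟩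
end

section
/- Let A be a finite alphabet and d ≥ 1. If γ₁ and γ₂ are distinct finite orbits in the full shift A^(ℤ^d), each of cardinality at most n/2, then the sets of n-cube patterns appearing in γ₁ and γ₂ are disjoint: W_n(γ₁) ∩ W_n(γ₂) = ∅. -/
/-- The shift action of `ℤ^d` on configurations `(Fin d → ℤ) → A`. -/
def shiftZd {A : Type*} {d : ℕ} (p : Fin d → ℤ) (x : (Fin d → ℤ) → A) : (Fin d → ℤ) → A :=
  fun q => x (fun i => p i + q i)

/-- A finite orbit of the `ℤ^d` shift action: a nonempty finite set that equals the
full orbit of each of its points. -/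
def IsFiniteOrbit {A : Type*} {d : ℕ} (γ : Set ((Fin d → ℤ) → A)) : Prop :=
  γ.Finite ∧ γ.Nonempty ∧ ∀ x ∈ γ, γ = {y | ∃ p : Fin d → ℤ, y = shiftZd p x}

/-- `Wpat n Y` is the set of `n`-cube patterns appearing (up to translation)
in points of `Y`. -/
def Wpat {A : Type*} {d : ℕ} (n : ℕ) (Y : Set ((Fin d → ℤ) → A)) :
    Set ((Fin d → Fin n) → A) :=
  {w | ∃ x ∈ Y, ∃ v : Fin d → ℤ, ∀ t : Fin d → Fin n, w t = x (fun i => v i + (t i : ℤ))}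

lemma shift_add {A : Type*} {d : ℕ} (p q : Fin d → ℤ) (x : (Fin d → ℤ) → A) :
    shiftZd p (shiftZd q x) = shiftZd (q + p) x := by
  funext r
  show x (fun i => q i + (p i + r i)) = x (fun i => (q i + p i) + r i)
  congr 1; funext i; ring

/-- The stabilizer (period group) of a configuration. -/
def stab {A : Type*} {d : ℕ} (x : (Fin d → ℤ) → A) : AddSubgroup (Fin d → ℤ) where
  carrier := {p | shiftZd p x = x}
  zero_mem' := by
    show shiftZd 0 x = x
    funext q; show x (fun i => (0:Fin d → ℤ) i + q i) = x q
    congr 1; funext i; simp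
  add_mem' := by
    intro a b ha hb
    show shiftZd (a + b) x = x
    rw [← shift_add, ha, hb]
  neg_mem' := by
    intro a ha
    show shiftZd (-a) x = x
    conv_lhs => rw [← ha]
    rw [shift_add, add_neg_cancel]
    funext q; show x (fun i => (0:Fin d → ℤ) i + q i) = x q
    congr 1; funext i; simp

lemma stab_shift {A : Type*} {d : ℕ} {x : (Fin d → ℤ) → A} {p : Fin d → ℤ}
    (hp : p ∈ stab x) (q : Fin d → ℤ) : x (fun i => p i + q i) = x q :=
  congrFun hp q

/-- Pigeonhole: a point of a finite orbit has a period `k • p` with `1 ≤ k ≤ |γ|`. -/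
lemma exists_period {A : Type*} {d : ℕ} {γ : Set ((Fin d → ℤ) → A)}
    (h : IsFiniteOrbit γ) {x : (Fin d → ℤ) → A} (hx : x ∈ γ) (p : Fin d → ℤ) :
    ∃ k : ℤ, 1 ≤ k ∧ k ≤ (γ.ncard : ℤ) ∧ k • p ∈ stab x := by
  obtain ⟨hfin, -, horb⟩ := h
  have hmem : ∀ j : ℕ, shiftZd ((j : ℤ) • p) x ∈ hfin.toFinset := by
    intro j
    rw [Set.Finite.mem_toFinset, horb x hx]
    exact ⟨(j : ℤ) • p, rfl⟩
  have hcard : hfin.toFinset.card = γ.ncard := (Set.ncard_eq_toFinset_card γ hfin).symm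
  obtain ⟨a, ha, b, hb, hab, heq⟩ :=
    Finset.exists_ne_map_eq_of_card_lt_of_maps_to
      (s := Finset.range (γ.ncard + 1)) (t := hfin.toFinset)
      (by rw [Finset.card_range, hcard]; omega)
      (fun j _ => hmem j)
  rw [Finset.mem_range] at ha hb
  -- wlog a < b
  rcases lt_or_gt_of_ne hab with hlt | hlt
  case' inr => rename' a => b', b => a; rename' b' => b; rw [eq_comm] at heq
  all_goals {
    refine ⟨(b : ℤ) - (a : ℤ), by omega, by omega, ?_⟩
    show shiftZd (((b : ℤ) - (a : ℤ)) • p) x = x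
    have h1 : shiftZd (-((a:ℤ) • p)) (shiftZd ((a:ℤ) • p) x)
        = shiftZd (-((a:ℤ) • p)) (shiftZd ((b:ℤ) • p) x) := by rw [heq]
    rw [shift_add, shift_add, add_neg_cancel] at h1
    have h2 : ((b:ℤ) • p + -((a:ℤ) • p)) = ((b : ℤ) - (a : ℤ)) • p := by
      rw [sub_smul]; abel
    rw [h2] at h1
    rw [← h1]
    funext q; show x (fun i => (0:Fin d → ℤ) i + q i) = x q
    congr 1; funext i; simp }

lemma floor_mem_stab {A : Type*} {d : ℕ} {x : (Fin d → ℤ) → A} {k : Fin d → ℤ}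
    (hstab : ∀ i, Pi.single i (k i) ∈ stab x) (q : Fin d → ℤ) :
    (fun i => k i * (q i / k i)) ∈ stab x := by
  have hsum : (fun i => k i * (q i / k i))
      = ∑ i : Fin d, (q i / k i) • Pi.single i (k i) := by
    funext j
    rw [Finset.sum_apply]
    simp only [Pi.smul_apply, Pi.single_apply, smul_ite, smul_zero, smul_eq_mul,
      mul_ite, mul_zero]
    rw [Finset.sum_ite_eq Finset.univ j (fun i => q i / k i * k i)]
    simp [mul_comm]
  rw [hsum]
  exact AddSubgroup.sum_mem _ (fun i _ => AddSubgroup.zsmul_mem _ (hstab i) _)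

lemma mod_reduce {A : Type*} {d : ℕ} {x : (Fin d → ℤ) → A} {k : Fin d → ℤ}
    (hstab : ∀ i, Pi.single i (k i) ∈ stab x) (q : Fin d → ℤ) :
    x q = x (fun i => q i % k i) := by
  have h := stab_shift (floor_mem_stab hstab q) (fun i => q i % k i)
  rw [← h]
  congr 1; funext i
  exact (Int.mul_ediv_add_emod (q i) (k i)).symm

/-- Two configurations with small per-direction periods agreeing on the `n`-cube
agree everywhere. -/
lemma agree_ext {A : Type*} {d n : ℕ} {x y : (Fin d → ℤ) → A} {k l : Fin d → ℤ}
    (hk1 : ∀ i, 1 ≤ k i) (hl1 : ∀ i, 1 ≤ l i) (hkl : ∀ i, k i + l i ≤ (n : ℤ))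
    (hkx : ∀ i, Pi.single i (k i) ∈ stab x) (hly : ∀ i, Pi.single i (l i) ∈ stab y)
    (hagree : ∀ q : Fin d → ℤ, (∀ i, 0 ≤ q i ∧ q i < (n : ℤ)) → x q = y q) : x = y := by
  have hqk : ∀ (q : Fin d → ℤ) (i : Fin d), 0 ≤ q i % k i ∧ q i % k i < k i := by
    intro q i
    exact ⟨Int.emod_nonneg _ (by have := hk1 i; omega), Int.emod_lt_of_pos _ (hk1 i)⟩
  have hql : ∀ (q : Fin d → ℤ) (i : Fin d), 0 ≤ q i % l i ∧ q i % l i < l i := by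
    intro q i
    exact ⟨Int.emod_nonneg _ (by have := hl1 i; omega), Int.emod_lt_of_pos _ (hl1 i)⟩
  -- Step A : each `Pi.single i (l i)` is also a period of `x`.
  have hlx : ∀ i₀, Pi.single i₀ (l i₀) ∈ stab x := by
    intro i₀
    set s : Fin d → ℤ := Pi.single i₀ (l i₀) with hs
    show shiftZd s x = x
    funext q
    show x (fun i => s i + q i) = x q
    set q' : Fin d → ℤ := fun i => q i % k i with hq'
    have hsbound : ∀ i, 0 ≤ s i + q' i ∧ s i + q' i < (n : ℤ) := by
      intro i
      have h1 : 0 ≤ q' i ∧ q' i < k i := hqk q i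
      have h2 := hkl i
      have h3 := hk1 i
      have h4 := hl1 i
      rcases eq_or_ne i i₀ with rfl | hne
      · rw [hs]; simp only [Pi.single_eq_same]; omega
      · rw [hs]; rw [Pi.single_eq_of_ne hne]; omega
    have hq'bound : ∀ i, 0 ≤ q' i ∧ q' i < (n : ℤ) := by
      intro i
      have h1 : 0 ≤ q' i ∧ q' i < k i := hqk q i
      have h2 := hkl i
      have h4 := hl1 i
      omega
    calc x (fun i => s i + q i)
        = x (fun i => s i + q' i) := by
          have h := stab_shift (floor_mem_stab hkx q) (fun i => s i + q' i)
          rw [← h]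
          congr 1; funext i
          have := Int.mul_ediv_add_emod (q i) (k i)
          show s i + q i = k i * (q i / k i) + (s i + q i % k i)
          omega
      _ = y (fun i => s i + q' i) := hagree _ hsbound
      _ = y q' := stab_shift (hly i₀) q'
      _ = x q' := (hagree _ hq'bound).symm
      _ = x q := (mod_reduce hkx q).symm
  -- Step B : reduce mod `l` everywhere.
  funext q
  have hq'bound : ∀ i, 0 ≤ q i % l i ∧ q i % l i < (n : ℤ) := by
    intro i
    have h1 := hql q i
    have h2 := hkl i
    have h3 := hk1 i
    omega
  calc x q = x (fun i => q i % l i) := mod_reduce hlx q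
    _ = y (fun i => q i % l i) := hagree _ hq'bound
    _ = y q := (mod_reduce hly q).symm

/-- Distinct finite orbits of cardinality at most `n/2` have disjoint sets of
`n`-cube patterns. -/
theorem stmt7 {A : Type*} [Finite A] {d n : ℕ} (hd : 1 ≤ d)
    (γ₁ γ₂ : Set ((Fin d → ℤ) → A)) (h₁ : IsFiniteOrbit γ₁) (h₂ : IsFiniteOrbit γ₂)
    (hne : γ₁ ≠ γ₂) (hc₁ : 2 * γ₁.ncard ≤ n) (hc₂ : 2 * γ₂.ncard ≤ n) :
    Wpat n γ₁ ∩ Wpat n γ₂ = ∅ := by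
  ext w
  simp only [Set.mem_inter_iff, Set.mem_empty_iff_false, iff_false]
  rintro ⟨⟨x, hx, v, hxv⟩, ⟨y, hy, u, hyu⟩⟩
  set X : (Fin d → ℤ) → A := shiftZd v x with hX
  set Y : (Fin d → ℤ) → A := shiftZd u y with hY
  have hXγ : X ∈ γ₁ := by rw [h₁.2.2 x hx]; exact ⟨v, rfl⟩
  have hYγ : Y ∈ γ₂ := by rw [h₂.2.2 y hy]; exact ⟨u, rfl⟩
  -- periods
  have hkch : ∀ i : Fin d, ∃ c : ℤ, 1 ≤ c ∧ c ≤ (γ₁.ncard : ℤ) ∧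
      (Pi.single i c : Fin d → ℤ) ∈ stab X := by
    intro i
    obtain ⟨c, hc1, hc2, hc3⟩ := exists_period h₁ hXγ ((Pi.single i (1 : ℤ) : Fin d → ℤ))
    refine ⟨c, hc1, hc2, ?_⟩
    have : c • (Pi.single i (1 : ℤ) : Fin d → ℤ) = Pi.single i c := by
      funext j; simp [Pi.single_apply, mul_ite]
    rwa [this] at hc3
  have hlch : ∀ i : Fin d, ∃ c : ℤ, 1 ≤ c ∧ c ≤ (γ₂.ncard : ℤ) ∧
      (Pi.single i c : Fin d → ℤ) ∈ stab Y := by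
    intro i
    obtain ⟨c, hc1, hc2, hc3⟩ := exists_period h₂ hYγ ((Pi.single i (1 : ℤ) : Fin d → ℤ))
    refine ⟨c, hc1, hc2, ?_⟩
    have : c • (Pi.single i (1 : ℤ) : Fin d → ℤ) = Pi.single i c := by
      funext j; simp [Pi.single_apply, mul_ite]
    rwa [this] at hc3
  choose k hk1 hk2 hk3 using hkch
  choose l hl1 hl2 hl3 using hlch
  have hkl : ∀ i, k i + l i ≤ (n : ℤ) := by
    intro i
    have := hk2 i; have := hl2 i
    have hc : (γ₁.ncard : ℤ) + (γ₂.ncard : ℤ) ≤ (n : ℤ) := by push_cast; omega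
    omega
  -- agreement on the cube
  have hagree : ∀ q : Fin d → ℤ, (∀ i, 0 ≤ q i ∧ q i < (n : ℤ)) → X q = Y q := by
    intro q hq
    have ht : ∀ i, (q i).toNat < n := by
      intro i
      have := hq i
      omega
    set t : Fin d → Fin n := fun i => ⟨(q i).toNat, ht i⟩ with htdef
    have hqt : ∀ i, ((t i : ℕ) : ℤ) = q i := by
      intro i
      simp [htdef, Int.toNat_of_nonneg (hq i).1]
    have e1 : X q = w t := by
      rw [hxv t]
      show x (fun i => v i + q i) = x (fun i => v i + ((t i : ℕ) : ℤ))
      congr 1; funext i; rw [hqt i]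
    have e2 : Y q = w t := by
      rw [hyu t]
      show y (fun i => u i + q i) = y (fun i => u i + ((t i : ℕ) : ℤ))
      congr 1; funext i; rw [hqt i]
    rw [e1, e2]
  have hXY : X = Y := agree_ext hk1 hl1 hkl hk3 hl3 hagree
  have hXγ₂ : X ∈ γ₂ := hXY ▸ hYγ
  exact hne ((h₁.2.2 X hXγ).trans (h₂.2.2 X hXγ₂).symm)
end

section
/- Let E ⊆ ℤ^d be finite, n ≥ 1, and A a finite alphabet. Suppose J is a set of pairs of n-cubes contained in E and w is a pattern on E ∖ A(J), where A(J) is the union of the second components of pairs in J. Then there is at most one pattern u ∈ A^E such that u restricted to E ∖ A(J) equals w and J is an n-repeat cover for u. -/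
/-!
A point `x ∈ E` where `u` and `u'` disagree cannot lie outside `A(J)`, so it lies in the second
cube of some `(v₁, v₂) ∈ J`. That pair is a repeat in both patterns, and minimality of `v₁` forces
`v₁ <lex v₂`; hence both patterns copy `x` from `v₁ + (x - v₂) ∈ E`, a lexicographically smaller
point where they still disagree. A finite set in which every point has a lexicographically smaller
one is empty.
-/

/-- Pointwise addition of points in `ℤ^d`. -/
def ptAdd {d : ℕ} (v t : Fin d → ℤ) : Fin d → ℤ := fun i => v i + t i

/-- `inCube n t` means `t` lies in the cube `[0, n)^d` of offsets. -/
def inCube {d : ℕ} (n : ℕ) (t : Fin d → ℤ) : Prop := ∀ i, 0 ≤ t i ∧ t i < n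

/-- The `n`-cube (translate of `F_n`) with corner `v`. -/
def cubeSet {d : ℕ} (n : ℕ) (v : Fin d → ℤ) : Set (Fin d → ℤ) :=
  {x | ∀ i, v i ≤ x i ∧ x i < v i + n}

/-- The `n`-cube with corner `v` is contained in `E`. -/
def cubeIn {d : ℕ} (n : ℕ) (E : Set (Fin d → ℤ)) (v : Fin d → ℤ) : Prop :=
  cubeSet n v ⊆ E

/-- The `n`-cube subpatterns of `u` at corners `v₁` and `v₂` coincide (up to translation). -/
def samePat {A : Type*} {d : ℕ} (n : ℕ) (u : (Fin d → ℤ) → A) (v₁ v₂ : Fin d → ℤ) : Prop :=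
  ∀ t : Fin d → ℤ, inCube n t → u (ptAdd v₁ t) = u (ptAdd v₂ t)

/-- Lexicographic (strict) order on `ℤ^d`. -/
def lexLt {d : ℕ} (p q : Fin d → ℤ) : Prop :=
  ∃ i : Fin d, (∀ j < i, p j = q j) ∧ p i < q i

/-- Lexicographic order on `ℤ^d`. -/
def lexLe {d : ℕ} (p q : Fin d → ℤ) : Prop := lexLt p q ∨ p = q

/-- `(v₁, v₂)` (identified with the pair of `n`-cubes at these corners) is an `n`-repeat in
the pattern `u` on `E`: both cubes lie in `E`, they are distinct, they carry the same
subpattern of `u`, and `v₁` is the lexicographically minimal occurrence of that subpattern. -/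
def IsRepeat {A : Type*} {d : ℕ} (n : ℕ) (E : Set (Fin d → ℤ)) (u : (Fin d → ℤ) → A)
    (v₁ v₂ : Fin d → ℤ) : Prop :=
  cubeIn n E v₁ ∧ cubeIn n E v₂ ∧ v₁ ≠ v₂ ∧ samePat n u v₁ v₂ ∧
    ∀ v, cubeIn n E v → samePat n u v v₁ → lexLe v₁ v

/-- `A(J)`: the union of the second cubes of the pairs in `J`. -/
def repArea {d : ℕ} (n : ℕ) (J : Set ((Fin d → ℤ) × (Fin d → ℤ))) : Set (Fin d → ℤ) :=
  ⋃ p ∈ J, cubeSet n p.2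

/-- `J` is an `n`-repeat cover for `u` on `E`: each pair in `J` is an `n`-repeat in `u`,
and the second cube of every `n`-repeat in `u` is contained in `A(J)`. -/
def IsRepeatCover {A : Type*} {d : ℕ} (n : ℕ) (E : Set (Fin d → ℤ)) (u : (Fin d → ℤ) → A)
    (J : Set ((Fin d → ℤ) × (Fin d → ℤ))) : Prop :=
  (∀ p ∈ J, IsRepeat n E u p.1 p.2) ∧
  (∀ v₁ v₂, IsRepeat n E u v₁ v₂ → cubeSet n v₂ ⊆ repArea n J)

open Set

theorem lexLt_iff_toLex_lt {d : ℕ} (p q : Fin d → ℤ) : lexLt p q ↔ toLex p < toLex q := Iff.rfl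

theorem lexLt_add_right {d : ℕ} {p q : Fin d → ℤ} (h : lexLt p q) (t : Fin d → ℤ) :
    lexLt (p + t) (q + t) := by
  obtain ⟨i, heq, hlt⟩ := h
  exact ⟨i, fun j hj => by simp [heq j hj], by simpa using hlt⟩

theorem eq_empty_of_forall_exists_lexLt {d : ℕ} {X : Set (Fin d → ℤ)} (hX : X.Finite)
    (h : ∀ x ∈ X, ∃ y ∈ X, lexLt y x) : X = ∅ := by
  by_contra hne
  obtain ⟨a, haX, hmin⟩ := hX.exists_minimalFor toLex X (nonempty_iff_ne_empty.mpr hne)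
  obtain ⟨y, hyX, hya⟩ := h a haX
  have hya := (lexLt_iff_toLex_lt y a).mp hya
  exact (hmin hyX hya.le).not_gt hya

theorem ptAdd_mem_cubeSet {d n : ℕ} (v : Fin d → ℤ) {t : Fin d → ℤ} (ht : inCube n t) :
    ptAdd v t ∈ cubeSet n v := fun i => by
  have := ht i
  simp only [ptAdd]
  omega

theorem inCube_sub_of_mem_cubeSet {d n : ℕ} {v x : Fin d → ℤ} (hx : x ∈ cubeSet n v) :
    inCube n (x - v) := fun i => by
  have := hx i
  simp only [Pi.sub_apply]
  omega

theorem IsRepeat.lexLt_corner {A : Type*} {d n : ℕ} {E : Set (Fin d → ℤ)} {u : (Fin d → ℤ) → A}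
    {v₁ v₂ : Fin d → ℤ} (h : IsRepeat n E u v₁ v₂) : lexLt v₁ v₂ := by
  obtain ⟨-, h₂, hne, hsame, hmin⟩ := h
  exact (hmin v₂ h₂ fun t ht => (hsame t ht).symm).resolve_right hne

theorem IsRepeat.copy {A : Type*} {d n : ℕ} {E : Set (Fin d → ℤ)} {u : (Fin d → ℤ) → A}
    {v₁ v₂ x : Fin d → ℤ} (h : IsRepeat n E u v₁ v₂) (hx : x ∈ cubeSet n v₂) :
    v₁ + (x - v₂) ∈ E ∧ lexLt (v₁ + (x - v₂)) x ∧ u (v₁ + (x - v₂)) = u x := by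
  have ht := inCube_sub_of_mem_cubeSet hx
  have hx₂ : ptAdd v₂ (x - v₂) = x := add_sub_cancel v₂ x
  have hx₁ : ptAdd v₁ (x - v₂) = v₁ + (x - v₂) := rfl
  refine ⟨hx₁ ▸ h.1 (ptAdd_mem_cubeSet v₁ ht), ?_, ?_⟩
  · simpa using lexLt_add_right h.lexLt_corner (x - v₂)
  · calc u (v₁ + (x - v₂)) = u (ptAdd v₁ (x - v₂)) := by rw [hx₁]
      _ = u (ptAdd v₂ (x - v₂)) := h.2.2.2.1 _ ht
      _ = u x := by rw [hx₂]

theorem exists_lexLt_disagreement {A : Type*} {d n : ℕ} {E : Set (Fin d → ℤ)}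
    {J : Set ((Fin d → ℤ) × (Fin d → ℤ))} {u u' : (Fin d → ℤ) → A}
    (hJ : ∀ p ∈ J, IsRepeat n E u p.1 p.2) (hJ' : ∀ p ∈ J, IsRepeat n E u' p.1 p.2)
    {x : Fin d → ℤ} (hx : x ∈ repArea n J) (hne : u x ≠ u' x) :
    ∃ y ∈ E, lexLt y x ∧ u y ≠ u' y := by
  simp only [repArea, mem_iUnion₂] at hx
  obtain ⟨p, hp, hxp⟩ := hx
  obtain ⟨hyE, hlt, hy⟩ := (hJ p hp).copy hxp
  obtain ⟨-, -, hy'⟩ := (hJ' p hp).copy hxp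
  exact ⟨_, hyE, hlt, by rwa [hy, hy']⟩

theorem stmt10_general {A : Type*} {d n : ℕ}
    (E : Set (Fin d → ℤ)) (hE : E.Finite)
    (J : Set ((Fin d → ℤ) × (Fin d → ℤ))) (w : (Fin d → ℤ) → A)
    (u u' : (Fin d → ℤ) → A)
    (hu : ∀ x ∈ E \ repArea n J, u x = w x) (hu' : ∀ x ∈ E \ repArea n J, u' x = w x)
    (hc : IsRepeatCover n E u J) (hc' : IsRepeatCover n E u' J) :
    ∀ x ∈ E, u x = u' x := by
  set X := {x ∈ E | u x ≠ u' x}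
  have hdescent : ∀ x ∈ X, ∃ y ∈ X, lexLt y x := by
    rintro x ⟨hxE, hne⟩
    have hxA : x ∈ repArea n J := by
      by_contra hxA
      exact hne ((hu x ⟨hxE, hxA⟩).trans (hu' x ⟨hxE, hxA⟩).symm)
    obtain ⟨y, hyE, hlt, hy⟩ := exists_lexLt_disagreement hc.1 hc'.1 hxA hne
    exact ⟨y, ⟨hyE, hy⟩, hlt⟩
  have hX : X = ∅ := eq_empty_of_forall_exists_lexLt (hE.subset (sep_subset _ _)) hdescent
  intro x hx
  by_contra hne
  exact (eq_empty_iff_forall_notMem.mp hX) x ⟨hx, hne⟩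

/-- A pattern `u` on finite `E ⊆ ℤ^d` is uniquely determined by an `n`-repeat cover `J`
and its restriction to `E ∖ A(J)`. -/
theorem stmt10 {A : Type*} {d n : ℕ} (hn : 1 ≤ n)
    (E : Set (Fin d → ℤ)) (hE : E.Finite)
    (J : Set ((Fin d → ℤ) × (Fin d → ℤ))) (w : (Fin d → ℤ) → A)
    (u u' : (Fin d → ℤ) → A)
    (hu : ∀ x ∈ E \ repArea n J, u x = w x) (hu' : ∀ x ∈ E \ repArea n J, u' x = w x)
    (hc : IsRepeatCover n E u J) (hc' : IsRepeatCover n E u' J) :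
    ∀ x ∈ E, u x = u' x :=
  stmt10_general E hE J w u u' hu hu' hc hc'
end

section
/- Let d ≥ 1, k > (2d+1)n, and u ∈ A^(F_k) a pattern on the cube F_k = [1,k]^d over a finite alphabet A with exactly j distinct n-cube subpatterns. If J is an n-repeat cover for u, then k^d − |A(J)| ≤ j·(1 + 4dn/k). -/
/-- The cube `F_k = [1,k]^d` in `ℤ^d`. -/
def Fcube (d k : ℕ) : Set (Fin d → ℤ) := {x | ∀ i, 1 ≤ x i ∧ x i ≤ (k : ℤ)}

/-- The set of distinct `n`-cube subpatterns of `u` occurring at `n`-cubes contained in `E`. -/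
def WnOf {A : Type*} {d : ℕ} (n : ℕ) (E : Set (Fin d → ℤ)) (u : (Fin d → ℤ) → A) :
    Set ((Fin d → Fin n) → A) :=
  {w | ∃ v : Fin d → ℤ, cubeIn n E v ∧ ∀ t : Fin d → Fin n, w t = u (fun i => v i + (t i : ℤ))}

/-!
A corner that is not the lexicographically first occurrence of its pattern is the second cube of
an `n`-repeat, so its `n`-cube lies in `A(J)`. Hence every point of `F_k \ A(J)` is covered only by
cubes at first occurrences, and there are at most `j` of those. Blow up each point of `F_k` to a
cube of side `m = k - n + 1` and each of the `m^d` admissible corners to a cube of side `k`: both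
families tile `[0, km)^d`, and the `m`-block of a point is covered by the `k`-blocks of corners
whose `n`-cubes contain it. Comparing volumes gives `|F_k \ A(J)| m^d ≤ j k^d`, and Bernoulli's
inequality `(m/k)^d ≥ 1 - d(n-1)/k` turns this into the bound.
-/

open scoped Finset

lemma lexLe_iff_toLex_le {d : ℕ} {p q : Fin d → ℤ} : lexLe p q ↔ toLex p ≤ toLex q := by
  rw [le_iff_lt_or_eq, toLex_inj]
  rfl

section Cubes

variable {d n : ℕ}

lemma mem_cubeSet_self (hn : 0 < n) (v : Fin d → ℤ) : v ∈ cubeSet n v :=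
  fun _ => ⟨le_rfl, by omega⟩

lemma cubeSet_eq_coe_piFinset (v : Fin d → ℤ) :
    cubeSet n v = ↑(Fintype.piFinset fun i => Finset.Ico (v i) (v i + n)) := by
  ext x
  simp [cubeSet]

lemma ncard_cubeSet (v : Fin d → ℤ) : (cubeSet n v).ncard = n ^ d := by
  rw [cubeSet_eq_coe_piFinset, Set.ncard_coe_finset, Fintype.card_piFinset]
  simp

lemma finite_cubeSet (v : Fin d → ℤ) : (cubeSet n v).Finite := by
  rw [cubeSet_eq_coe_piFinset]
  exact Finset.finite_toSet _

lemma Fcube_eq_coe_piFinset (k : ℕ) :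
    Fcube d k = ↑(Fintype.piFinset fun _ : Fin d => Finset.Icc (1 : ℤ) k) := by
  ext x
  rw [Finset.mem_coe, Fintype.mem_piFinset]
  simp only [Finset.mem_Icc]
  rfl

lemma ncard_Fcube (k : ℕ) : (Fcube d k).ncard = k ^ d := by
  rw [Fcube_eq_coe_piFinset, Set.ncard_coe_finset, Fintype.card_piFinset]
  simp

lemma finite_Fcube (k : ℕ) : (Fcube d k).Finite := by
  rw [Fcube_eq_coe_piFinset]
  exact Finset.finite_toSet _

lemma cubeIn_Fcube_iff (hn : 0 < n) {k : ℕ} {v : Fin d → ℤ} :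
    cubeIn n (Fcube d k) v ↔ ∀ i, 1 ≤ v i ∧ v i + n ≤ k + 1 := by
  refine ⟨fun h i => ⟨(h (mem_cubeSet_self hn v) i).1, ?_⟩, fun h x hx i => ?_⟩
  · have hfar : (fun i => v i + n - 1) ∈ cubeSet n v := fun _ => by dsimp only; omega
    have := (h hfar i).2
    omega
  · have := h i
    have := hx i
    constructor <;> omega

lemma disjoint_cubeSet_mul_sub_one (a : ℕ) {x y : Fin d → ℤ} (hxy : x ≠ y) :
    Disjoint (cubeSet a fun i => a * (x i - 1)) (cubeSet a fun i => a * (y i - 1)) := by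
  obtain ⟨i, hi⟩ := Function.ne_iff.mp hxy
  refine Set.disjoint_left.mpr fun z hzx hzy => hi ?_
  have := hzx i
  have := hzy i
  rcases lt_trichotomy (x i) (y i) with h | h | h
  · nlinarith
  · exact h
  · nlinarith

lemma card_mul_pow_le_of_subset_biUnion {ι κ : Type*} {a b : ℕ} {P : Finset ι} {M : Finset κ}
    {f : ι → Fin d → ℤ} {g : κ → Fin d → ℤ}
    (hdisj : (P : Set ι).PairwiseDisjoint fun x => cubeSet a (f x))
    (hsub : ∀ x ∈ P, cubeSet a (f x) ⊆ ⋃ v ∈ M, cubeSet b (g v)) :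
    #P * a ^ d ≤ #M * b ^ d := by
  calc #P * a ^ d = (⋃ x ∈ P, cubeSet a (f x)).ncard := by
        have h := P.finite_toSet.ncard_biUnion (fun x _ => finite_cubeSet (f x)) hdisj
        rw [finsum_mem_coe_finset] at h
        simp only [Finset.mem_coe, ncard_cubeSet, Finset.sum_const, smul_eq_mul] at h
        exact h.symm
    _ ≤ (⋃ v ∈ M, cubeSet b (g v)).ncard :=
        Set.ncard_le_ncard (Set.iUnion₂_subset hsub) (M.finite_toSet.biUnion fun v _ => finite_cubeSet (g v))
    _ ≤ ∑ v ∈ M, (cubeSet b (g v)).ncard := M.set_ncard_biUnion_le _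
    _ = #M * b ^ d := by simp [ncard_cubeSet]

end Cubes

section Occurrences

variable {A : Type*} {d n : ℕ} {E : Set (Fin d → ℤ)} {u : (Fin d → ℤ) → A}

lemma finite_setOf_cubeIn (hn : 0 < n) (hE : E.Finite) : {v | cubeIn n E v}.Finite :=
  hE.subset fun v hv => hv (mem_cubeSet_self hn v)

def IsFirstOccurrence (n : ℕ) (E : Set (Fin d → ℤ)) (u : (Fin d → ℤ) → A) (v : Fin d → ℤ) :
    Prop :=
  cubeIn n E v ∧ ∀ w, cubeIn n E w → samePat n u w v → lexLe v w

def pattern (n : ℕ) (u : (Fin d → ℤ) → A) (v : Fin d → ℤ) : (Fin d → Fin n) → A :=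
  fun t => u fun i => v i + (t i : ℤ)

lemma WnOf_eq_image : WnOf n E u = pattern n u '' {v | cubeIn n E v} := by
  ext w
  constructor
  · rintro ⟨v, hv, hw⟩
    exact ⟨v, hv, funext fun t => (hw t).symm⟩
  · rintro ⟨v, hv, rfl⟩
    exact ⟨v, hv, fun t => rfl⟩

lemma samePat_of_pattern_eq {v w : Fin d → ℤ} (h : pattern n u v = pattern n u w) :
    samePat n u v w := by
  intro t ht
  have := congrFun h fun i => ⟨(t i).toNat, by have := ht i; omega⟩
  simp only [pattern, Int.toNat_of_nonneg (ht _).1] at this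
  exact this

lemma IsFirstOccurrence.eq {v w : Fin d → ℤ} (hv : IsFirstOccurrence n E u v)
    (hw : IsFirstOccurrence n E u w) (h : samePat n u v w) : v = w := by
  rw [← toLex_inj]
  exact le_antisymm (lexLe_iff_toLex_le.mp (hv.2 w hw.1 fun t ht => (h t ht).symm))
    (lexLe_iff_toLex_le.mp (hw.2 v hv.1 h))

lemma ncard_setOf_isFirstOccurrence_le (hn : 0 < n) (hE : E.Finite) :
    {v | IsFirstOccurrence n E u v}.ncard ≤ (WnOf n E u).ncard := by
  rw [WnOf_eq_image]
  refine Set.ncard_le_ncard_of_injOn (pattern n u) (fun v hv => ⟨v, hv.1, rfl⟩)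
    (fun v hv w hw h => IsFirstOccurrence.eq hv hw (samePat_of_pattern_eq h))
    ((finite_setOf_cubeIn hn hE).image _)

lemma exists_isRepeat_of_not_isFirstOccurrence (hn : 0 < n) (hE : E.Finite) {v : Fin d → ℤ}
    (hv : cubeIn n E v) (hfirst : ¬ IsFirstOccurrence n E u v) : ∃ v₁, IsRepeat n E u v₁ v := by
  obtain ⟨v₁, ⟨hv₁, hsame⟩, hmin⟩ := Set.exists_min_image {w | cubeIn n E w ∧ samePat n u w v}
    toLex ((finite_setOf_cubeIn hn hE).subset fun w hw => hw.1) ⟨v, hv, fun _ _ => rfl⟩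
  have hmin' : ∀ w, cubeIn n E w → samePat n u w v → lexLe v₁ w :=
    fun w hw hs => lexLe_iff_toLex_le.mpr (hmin w ⟨hw, hs⟩)
  refine ⟨v₁, hv₁, hv, ?_, hsame, fun w hw hs => hmin' w hw fun t ht => (hs t ht).trans (hsame t ht)⟩
  rintro rfl
  exact hfirst ⟨hv, hmin'⟩

variable {J : Set ((Fin d → ℤ) × (Fin d → ℤ))}

lemma IsRepeatCover.repArea_subset (hJ : IsRepeatCover n E u J) : repArea n J ⊆ E :=
  Set.iUnion₂_subset fun p hp => (hJ.1 p hp).2.1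

lemma IsRepeatCover.isFirstOccurrence_of_notMem_repArea (hJ : IsRepeatCover n E u J)
    (hn : 0 < n) (hE : E.Finite) {v x : Fin d → ℤ} (hv : cubeIn n E v) (hxv : x ∈ cubeSet n v)
    (hx : x ∉ repArea n J) : IsFirstOccurrence n E u v := by
  by_contra hfirst
  obtain ⟨v₁, hrep⟩ := exists_isRepeat_of_not_isFirstOccurrence hn hE hv hfirst
  exact hx (hJ.2 v₁ v hrep hxv)

end Occurrences

lemma bounds_of_blocks_meet {k m n x z q : ℤ} (hkm : k = m + n - 1) (hm : 0 < m) (hn : 1 ≤ n)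
    (hx : 1 ≤ x ∧ x ≤ k) (hz : m * (x - 1) ≤ z ∧ z < m * (x - 1) + m)
    (hq : k * q ≤ z ∧ z < k * q + k) :
    0 ≤ q ∧ q < m ∧ q < x ∧ x ≤ q + n := by
  obtain ⟨hx1, hxk⟩ := hx
  obtain ⟨hz1, hz2⟩ := hz
  obtain ⟨hq1, hq2⟩ := hq
  subst hkm
  have hq0 : 0 ≤ q := by nlinarith
  have hqm : q < m := by nlinarith
  exact ⟨hq0, hqm, by nlinarith, by nlinarith⟩

lemma ncard_mul_pow_le_of_forall_cubeIn_Fcube {d n k : ℕ} (hn : 0 < n) (hnk : n ≤ k)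
    {P M : Set (Fin d → ℤ)} (hP : P ⊆ Fcube d k) (hM : M.Finite)
    (hPM : ∀ x ∈ P, ∀ v, cubeIn n (Fcube d k) v → x ∈ cubeSet n v → v ∈ M) :
    P.ncard * (k - n + 1) ^ d ≤ M.ncard * k ^ d := by
  obtain ⟨P, rfl⟩ := ((finite_Fcube k).subset hP).exists_finset_coe
  obtain ⟨M, rfl⟩ := hM.exists_finset_coe
  rw [Set.ncard_coe_finset, Set.ncard_coe_finset]
  set m := k - n + 1
  have hmk : (k : ℤ) = m + n - 1 := by omega
  refine card_mul_pow_le_of_subset_biUnion (f := fun x i => m * (x i - 1))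
    (g := fun v i => k * (v i - 1)) (fun x _ y _ hxy => disjoint_cubeSet_mul_sub_one m hxy)
    fun x hx z hz => ?_
  have hk : (0 : ℤ) < k := by omega
  have hq (i : Fin d) : k * (z i / k) ≤ z i ∧ z i < k * (z i / k) + k :=
    ⟨Int.mul_ediv_self_le hk.ne', Int.lt_mul_ediv_self_add hk⟩
  have hbounds (i : Fin d) := bounds_of_blocks_meet hmk (by omega) (by omega)
    (by have := hP hx i; omega) (hz i) (hq i)
  refine Set.mem_iUnion₂.mpr ⟨fun i => z i / k + 1, hPM x hx _ ?_ fun i => ?_, fun i => ?_⟩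
  · refine (cubeIn_Fcube_iff hn).mpr fun i => ?_
    have := hbounds i
    omega
  · have := hbounds i
    omega
  · have := hq i
    simpa only [add_sub_cancel_right] using this

lemma le_mul_one_add_of_mul_pow_le {d n k : ℕ} {X j : ℝ} (hn : 1 ≤ n) (hk : (2 * d + 1) * n < k)
    (hj : 0 ≤ j) (h : X * ((k : ℝ) - n + 1) ^ d ≤ j * (k : ℝ) ^ d) :
    X ≤ j * (1 + 4 * d * n / k) := by
  have hnR : (1 : ℝ) ≤ n := by exact_mod_cast hn
  have hkR : ((2 * d + 1) * n : ℝ) < k := by exact_mod_cast hk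
  have hk0 : (0 : ℝ) < k := by nlinarith
  set s : ℝ := d * (n - 1) / k with hs
  have hs0 : 0 ≤ s := by positivity
  have hs_half : 2 * s ≤ 1 := by
    rw [hs, ← mul_div_assoc, div_le_one hk0]
    nlinarith
  have hs_le : 2 * s ≤ 4 * d * n / k := by
    rw [hs, mul_div_assoc', div_le_div_iff_of_pos_right hk0]
    nlinarith
  have hbern : (1 - s) * (k : ℝ) ^ d ≤ ((k : ℝ) - n + 1) ^ d := by
    have hnk : ((n : ℝ) - 1) / k ≤ 2 := by
      rw [div_le_iff₀ hk0]
      nlinarith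
    have := one_add_mul_le_pow (a := -(((n : ℝ) - 1) / k)) (by linarith) d
    rw [← le_div_iff₀ (by positivity), ← div_pow]
    convert this using 1
    · rw [hs]
      ring
    · field_simp
      ring
  rcases le_or_gt X 0 with hX | hX
  · have : 0 ≤ j * (1 + 4 * d * n / k) := by positivity
    linarith
  have hXs : X * (1 - s) ≤ j := by
    have hkd : (0 : ℝ) < k ^ d := by positivity
    refine le_of_mul_le_mul_right ?_ hkd
    calc X * (1 - s) * k ^ d ≤ X * ((k : ℝ) - n + 1) ^ d := by
          rw [mul_assoc]; exact mul_le_mul_of_nonneg_left hbern hX.le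
      _ ≤ j * k ^ d := h
  calc X ≤ X * (1 - s) * (1 + 2 * s) := by
        nlinarith [mul_nonneg (mul_nonneg hX.le hs0) (sub_nonneg.mpr hs_half)]
    _ ≤ j * (1 + 2 * s) := by gcongr
    _ ≤ j * (1 + 4 * d * n / k) := by gcongr

theorem stmt11_general {A : Type*} {d n k j : ℕ} (hn : 1 ≤ n)
    (hk : (2 * d + 1) * n < k) (u : (Fin d → ℤ) → A)
    (hj : (WnOf n (Fcube d k) u).ncard = j)
    (J : Set ((Fin d → ℤ) × (Fin d → ℤ)))
    (hJ : IsRepeatCover n (Fcube d k) u J) :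
    (k : ℝ) ^ d - ((repArea n J).ncard : ℝ) ≤
      (j : ℝ) * (1 + 4 * d * n / k) := by
  have hnk : n ≤ k := by nlinarith
  have hE := finite_Fcube (d := d) k
  set M := {v | IsFirstOccurrence n (Fcube d k) u v}
  have hM : M.ncard ≤ j := hj ▸ ncard_setOf_isFirstOccurrence_le hn hE
  have hcount : (Fcube d k \ repArea n J).ncard * (k - n + 1) ^ d ≤ M.ncard * k ^ d :=
    ncard_mul_pow_le_of_forall_cubeIn_Fcube hn hnk Set.sdiff_subset
      ((finite_setOf_cubeIn hn hE).subset fun v hv => hv.1)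
      fun x hx _ hv hxv => hJ.isFirstOccurrence_of_notMem_repArea hn hE hv hxv hx.2
  have hdiff : ((Fcube d k \ repArea n J).ncard : ℝ) = k ^ d - (repArea n J).ncard := by
    rw [Set.cast_ncard_sdiff hJ.repArea_subset hE, ncard_Fcube, Nat.cast_pow]
  refine le_mul_one_add_of_mul_pow_le hn hk (Nat.cast_nonneg j) ?_
  rw [← hdiff]
  calc ((Fcube d k \ repArea n J).ncard : ℝ) * ((k : ℝ) - n + 1) ^ d
      = ((Fcube d k \ repArea n J).ncard * (k - n + 1) ^ d : ℕ) := by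
        push_cast [Nat.cast_sub hnk]
        ring
    _ ≤ (M.ncard * k ^ d : ℕ) := by exact_mod_cast hcount
    _ ≤ (j : ℝ) * k ^ d := by
        push_cast
        gcongr

/-- If `k > (2d+1)n` and `u ∈ A^(F_k)` has exactly `j` distinct `n`-cube subpatterns, then
for any `n`-repeat cover `J` of `u`, `k^d − |A(J)| ≤ j·(1 + 4dn/k)`. -/
theorem stmt11 {A : Type*} {d n k j : ℕ} (hd : 1 ≤ d) (hn : 1 ≤ n)
    (hk : (2 * d + 1) * n < k) (u : (Fin d → ℤ) → A)
    (hj : (WnOf n (Fcube d k) u).ncard = j)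
    (J : Set ((Fin d → ℤ) × (Fin d → ℤ)))
    (hJ : IsRepeatCover n (Fcube d k) u J) :
    (k : ℝ) ^ d - ((repArea n J).ncard : ℝ) ≤
      (j : ℝ) * (1 + 4 * d * n / k) :=
  stmt11_general hn hk u hj J hJ
end

section
/- Let F ⊆ ℤ^(d₀) be a hypercube of side length k, and let C be a collection of n-cubes contained in F with the property that for every point p in the n-interior of F there exists a cube S ∈ C whose center c satisfies ρ(p, c) ≤ n/6 in the ℓ∞ metric. Then there exists C' ⊆ C such that the n-interior of F is covered by the union of the cubes in C', and |C'| ≤ (2k/n)^(d₀). -/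
/-- The `n`-interior of a set `F ⊆ ℤ^d`: points whose closed `ℓ∞`-ball of radius `n`
is contained in `F`. -/
def intN {d : ℕ} (n : ℕ) (F : Set (Fin d → ℤ)) : Set (Fin d → ℤ) :=
  {x | ∀ y : Fin d → ℤ, (∀ i, |x i - y i| ≤ (n : ℤ)) → y ∈ F}

/-- If `C` is a collection of `n`-cubes in a hypercube `F` of side `k` such that every
point of the `n`-interior of `F` is within `ℓ∞`-distance `n/6` of the center of some cube
of `C`, then some subcollection `C'` of at most `(2k/n)^(d₀)` cubes covers the
`n`-interior of `F`. -/
theorem stmt12 {d₀ n k : ℕ} (hn : 1 ≤ n) (a : Fin d₀ → ℤ)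
    (C : Set (Fin d₀ → ℤ))
    (hC : ∀ v ∈ C, cubeSet n v ⊆ cubeSet k a)
    (hdense : ∀ p ∈ intN n (cubeSet k a),
      ∃ v ∈ C, ∀ i, |(p i : ℝ) - ((v i : ℝ) + ((n : ℝ) - 1) / 2)| ≤ (n : ℝ) / 6) :
    ∃ C' ⊆ C, (intN n (cubeSet k a) ⊆ ⋃ v ∈ C', cubeSet n v) ∧
      (C'.ncard : ℝ) ≤ (2 * (k : ℝ) / n) ^ d₀ := by
  classical
  -- characterization of the interior
  have hintN : ∀ x : Fin d₀ → ℤ,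
      x ∈ intN n (cubeSet k a) ↔ ∀ i, a i + n ≤ x i ∧ x i + n < a i + k := by
    intro x
    constructor
    · intro h i
      constructor
      · have h1 := h (Function.update x i (x i - n)) ?_ i
        · rw [Function.update_self] at h1; omega
        · intro j
          rcases eq_or_ne j i with rfl | hj
          · rw [Function.update_self, show x j - (x j - (n:ℤ)) = (n:ℤ) by ring]
            rw [abs_le]; omega
          · rw [Function.update_of_ne hj, sub_self, abs_zero]; positivity
      · have h1 := h (Function.update x i (x i + n)) ?_ i
        · rw [Function.update_self] at h1; omega
        · intro j
          rcases eq_or_ne j i with rfl | hj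
          · rw [Function.update_self, show x j - (x j + (n:ℤ)) = -(n:ℤ) by ring]
            rw [abs_le]; omega
          · rw [Function.update_of_ne hj, sub_self, abs_zero]; positivity
    · intro h y hy i
      have h1 := h i
      have h2 := abs_le.mp (hy i)
      constructor <;> omega
  rcases Nat.eq_zero_or_pos d₀ with hd | hd
  · -- dimension zero: everything is trivial
    subst hd
    have hp : a ∈ intN n (cubeSet k a) := by
      intro y _ i; exact i.elim0
    obtain ⟨v, hvC, -⟩ := hdense a hp
    refine ⟨{v}, by simpa using hvC, ?_, ?_⟩
    · intro x _
      refine Set.mem_biUnion rfl ?_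
      intro i; exact i.elim0
    · simp [Set.ncard_singleton]
  by_cases hne : (intN n (cubeSet k a)).Nonempty
  swap
  · refine ⟨∅, Set.empty_subset _, ?_, ?_⟩
    · intro x hx; exact absurd ⟨x, hx⟩ hne
    · simp only [Set.ncard_empty, Nat.cast_zero]; positivity
  obtain ⟨p₀, hp₀⟩ := hne
  have hk : 2 * n + 1 ≤ k := by
    have := (hintN p₀).mp hp₀ ⟨0, hd⟩
    omega
  have hkZ : 2 * (n:ℤ) + 1 ≤ (k:ℤ) := by exact_mod_cast hk
  set m : ℤ := (2*(n:ℤ)+2)/6 with hm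
  have hm0 : 0 ≤ m := by omega
  have hm1 : 6*m ≤ 2*(n:ℤ)+2 := by omega
  have hm2 : 2*(n:ℤ)+2 < 6*(m+1) := by omega
  set s : ℤ := 2*m+1 with hs
  have hs0 : (0:ℤ) < s := by omega
  have h3s : 2*(n:ℤ) ≤ 3*s := by omega
  set L : ℤ := (k:ℤ) - 2*n with hL
  have hL1 : 1 ≤ L := by omega
  set J : ℤ := (L-1)/s with hJ
  have hJ0 : 0 ≤ J := by rw [hJ]; exact Int.ediv_nonneg (by omega) hs0.le
  have hsJ : s * J ≤ L - 1 := by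
    have h1 := Int.mul_ediv_add_emod (L-1) s
    have h2 := Int.emod_nonneg (L-1) hs0.ne'
    rw [hJ]; linarith
  -- key arithmetic lemma: cubes whose center is within n/6 of p contain the
  -- ball of radius m around p
  have keyA : ∀ t z : ℤ, |(t:ℝ) - (((n:ℝ)-1)/2)| ≤ (n:ℝ)/6 → |z| ≤ m →
      0 ≤ t + z ∧ t + z ≤ (n:ℤ) - 1 := by
    intro t z ht hz
    rw [abs_le] at ht hz
    have h1 : (2*(n:ℝ) - 3) ≤ 6*t := by linarith
    have h2 : (6*(t:ℝ)) ≤ 4*n - 3 := by linarith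
    have h1' : 2*(n:ℤ) - 3 ≤ 6*t := by exact_mod_cast h1
    have h2' : 6*t ≤ 4*(n:ℤ) - 3 := by exact_mod_cast h2
    omega
  -- the grid of candidate points
  set P : (Fin d₀ → ℤ) → Fin d₀ → ℤ :=
    fun j i => min (a i + (n:ℤ) + m + s * j i) (a i + (n:ℤ) + L - 1) with hP
  set B : Finset (Fin d₀ → ℤ) := Fintype.piFinset fun _ => Finset.Icc (0:ℤ) J with hB
  have hPmem : ∀ j ∈ B, P j ∈ intN n (cubeSet k a) := by
    intro j hj
    rw [hintN]
    intro i
    have hji : j i ∈ Finset.Icc (0:ℤ) J := Fintype.mem_piFinset.mp hj i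
    rw [Finset.mem_Icc] at hji
    have hsj : 0 ≤ s * j i := mul_nonneg hs0.le hji.1
    simp only [hP]
    constructor
    · exact le_min (by linarith) (by linarith)
    · have := min_le_right (a i + (n:ℤ) + m + s * j i) (a i + (n:ℤ) + L - 1)
      linarith
  -- choose cubes for grid points
  have hch : ∀ j : Fin d₀ → ℤ, ∃ v : Fin d₀ → ℤ, P j ∈ intN n (cubeSet k a) →
      (v ∈ C ∧ ∀ i, |((P j i : ℤ) : ℝ) - ((v i : ℝ) + ((n:ℝ)-1)/2)| ≤ (n:ℝ)/6) := by
    intro j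
    by_cases h : P j ∈ intN n (cubeSet k a)
    · obtain ⟨v, hv1, hv2⟩ := hdense _ h
      exact ⟨v, fun _ => ⟨hv1, hv2⟩⟩
    · exact ⟨a, fun h' => absurd h' h⟩
  choose v hv using hch
  refine ⟨↑(B.image v), ?_, ?_, ?_⟩
  · intro w hw
    obtain ⟨j, hj, rfl⟩ := Finset.mem_image.mp (Finset.mem_coe.mp hw)
    exact (hv j (hPmem j hj)).1
  · -- coverage
    intro x hx
    have hx' := (hintN x).mp hx
    set jx : Fin d₀ → ℤ := fun i => (x i - a i - n) / s with hjx
    have hjxB : jx ∈ B := by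
      rw [hB, Fintype.mem_piFinset]
      intro i
      rw [Finset.mem_Icc]
      have h1 := hx' i
      constructor
      · exact Int.ediv_nonneg (by omega) hs0.le
      · rw [hJ]; exact Int.ediv_le_ediv hs0 (by omega)
    have hPx : ∀ i, |x i - P jx i| ≤ m := by
      intro i
      have h1 := hx' i
      have hdm := Int.mul_ediv_add_emod (x i - a i - n) s
      have hr0 := Int.emod_nonneg (x i - a i - n) hs0.ne'
      have hr1 := Int.emod_lt_of_pos (x i - a i - n) hs0
      have hjxi : jx i = (x i - a i - (n:ℤ)) / s := rfl
      rw [abs_le]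
      simp only [hP, hjxi]
      rcases le_or_gt (a i + (n:ℤ) + m + s * ((x i - a i - (n:ℤ))/s)) (a i + (n:ℤ) + L - 1)
        with hcase | hcase
      · rw [min_eq_left hcase]; constructor <;> linarith
      · rw [min_eq_right hcase.le]; constructor <;> linarith
    have hvj := hv jx (hPmem jx hjxB)
    refine Set.mem_biUnion (Finset.mem_coe.mpr (Finset.mem_image_of_mem v hjxB)) ?_
    intro i
    have hA := keyA (P jx i - v jx i) (x i - P jx i) ?_ (hPx i)
    · constructor <;> omega
    · have h2 := hvj.2 i
      rw [abs_le] at h2 ⊢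
      push_cast at h2 ⊢
      constructor <;> linarith [h2.1, h2.2]
  · -- cardinality
    rw [Set.ncard_coe_finset]
    have h1 : (B.image v).card ≤ B.card := Finset.card_image_le
    have h2 : B.card = (J+1).toNat ^ d₀ := by
      rw [hB, Fintype.card_piFinset]
      simp [Int.card_Icc]
    have hnJ : (n:ℤ)*(J+1) ≤ 2*k := by
      have t1 : 2*(n:ℤ)*J ≤ 3*s*J := mul_le_mul_of_nonneg_right h3s hJ0
      have t2 : 3*s*J ≤ 3*(L-1) := by nlinarith [hsJ]
      have hk0 : (0:ℤ) ≤ k := Int.ofNat_nonneg k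
      nlinarith [t1, t2]
    have hbase : ((J+1).toNat : ℝ) ≤ 2*(k:ℝ)/n := by
      have hcast : ((J+1).toNat : ℝ) = ((J:ℝ)+1) := by
        have := Int.toNat_of_nonneg (show (0:ℤ) ≤ J + 1 by omega)
        exact_mod_cast congrArg (fun z : ℤ => (z:ℝ)) this
      rw [hcast, le_div_iff₀ (by positivity : (0:ℝ) < (n:ℝ))]
      have h' : ((n:ℝ))*((J:ℝ)+1) ≤ 2*(k:ℝ) := by exact_mod_cast hnJ
      linarith
    calc ((B.image v).card : ℝ) ≤ (B.card : ℝ) := by exact_mod_cast h1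
      _ = ((J+1).toNat : ℝ)^d₀ := by rw [h2]; push_cast; ring
      _ ≤ (2*(k:ℝ)/n)^d₀ := pow_le_pow_left₀ (by positivity) hbase d₀
end

section
/- Let A be a finite alphabet, d ≥ 1, and let X_ω ⊆ A^(ℤ^d) be the random ℤ^d-SFT obtained by independently allowing each pattern in A^(F_n) with probability α. Then the probability that X_ω contains no finite orbit is at most the product over all finite orbits γ of the full shift with |γ| ≤ n/2 of (1 − α^|γ|). -/
open MeasureTheory

/-- The `F_n`-pattern of the configuration `x` at the translate of `F_n` with corner `v`. -/
def patternOf {A : Type*} {d n : ℕ} (x : (Fin d → ℤ) → A) (v : Fin d → ℤ) :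
    (Fin d → Fin n) → A :=
  fun t => x (fun i => v i + (t i : ℤ))

/-- The product Bernoulli(α) measure on `Ω_n = {0,1}^(A^(F_n))`: each `F_n`-pattern is
independently allowed (`true`) with probability `α`. -/
noncomputable def bernoulliProd (A : Type*) [Fintype A] [DecidableEq A] (d n : ℕ)
    (α : ENNReal) (hα : α ≤ 1) : Measure (((Fin d → Fin n) → A) → Bool) :=
  Measure.pi (fun _ => (PMF.bernoulli α.toNNReal (by simpa using ENNReal.toNNReal_mono ENNReal.one_ne_top hα)).toMeasure)

/-- The (random) `ℤ^d`-SFT determined by `ω`: configurations all of whose `F_n`-patterns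
are allowed by `ω`. -/
def sftOfOmega {A : Type*} {d n : ℕ} (ω : ((Fin d → Fin n) → A) → Bool) :
    Set ((Fin d → ℤ) → A) :=
  {x | ∀ v : Fin d → ℤ, ω (patternOf x v) = true}

/-!
A finite orbit `γ` is periodic in every coordinate direction with a period at most `|γ|`
(pigeonhole on the shifts along that direction). Two configurations whose periods are bounded by
`m` and `m'` with `m + m' ≤ n` and which carry the same `F_n`-pattern somewhere coincide after
translation, since each coordinate can be reduced modulo the periods into the box. Hence distinct
orbits with `2|γ| ≤ n` have disjoint pattern sets `W_n(γ)`, of size at most `|γ|`, so the events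
"`γ ⊆ X_ω`" depend on disjoint sets of coordinates of `ω`, are independent, and have probability
`α^|W_n(γ)| ≥ α^|γ|`.
-/

section FiniteOrbits

variable {A : Type*} {d : ℕ}

def periods (x : (Fin d → ℤ) → A) : AddSubgroup (Fin d → ℤ) where
  carrier := {v | ∀ q, x (v + q) = x q}
  zero_mem' q := by rw [zero_add]
  add_mem' {v w} hv hw q := by rw [add_assoc, hv, hw]
  neg_mem' {v} hv q := by rw [← hv, add_neg_cancel_left]

lemma sub_mem_periods_of_shiftZd_eq {x : (Fin d → ℤ) → A} {v w : Fin d → ℤ}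
    (h : shiftZd v x = shiftZd w x) : v - w ∈ periods x := fun q => by
  have h' := congrFun h (q - w)
  simp only [shiftZd, Pi.sub_apply, add_sub_cancel] at h'
  convert h' using 2
  funext i
  simp only [Pi.add_apply, Pi.sub_apply]
  ring

lemma apply_eq_of_dvd_sub {x : (Fin d → ℤ) → A} {p : Fin d → ℤ}
    (hpx : ∀ i, Pi.single i (p i) ∈ periods x) {a b : Fin d → ℤ} (hab : ∀ i, p i ∣ a i - b i) :
    x a = x b := by
  classical
  have hmem : a - b ∈ periods x := by
    rw [← Finset.univ_sum_single (a - b)]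
    refine AddSubgroup.sum_mem _ fun i _ => ?_
    obtain ⟨c, hc⟩ := hab i
    rw [Pi.sub_apply, hc, mul_comm, ← smul_eq_mul, Pi.single_smul']
    exact AddSubgroup.zsmul_mem _ (hpx i) c
  simpa using hmem b

lemma apply_emod {x : (Fin d → ℤ) → A} {p : Fin d → ℤ}
    (hpx : ∀ i, Pi.single i (p i) ∈ periods x) (q : Fin d → ℤ) :
    x q = x (fun i => q i % p i) :=
  apply_eq_of_dvd_sub hpx fun i => ⟨q i / p i, by rw [Int.emod_def]; ring⟩

lemma single_mem_periods_of_eqOn_box {x y : (Fin d → ℤ) → A} {p p' : Fin d → ℤ} {m m' n : ℤ}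
    (hp : ∀ i, 0 < p i ∧ p i ≤ m) (hp' : ∀ i, 0 < p' i ∧ p' i ≤ m') (hn : m + m' ≤ n)
    (hpx : ∀ i, Pi.single i (p i) ∈ periods x) (hpy : ∀ i, Pi.single i (p' i) ∈ periods y)
    (hxy : ∀ q, (∀ i, 0 ≤ q i ∧ q i < n) → x q = y q) (i : Fin d) :
    Pi.single i (p i) ∈ periods y := by
  intro q
  set r : Fin d → ℤ := fun j => q j % p' j
  have hr : ∀ j, 0 ≤ r j ∧ r j < p' j := fun j =>
    ⟨Int.emod_nonneg _ (hp' j).1.ne', Int.emod_lt_of_pos _ (hp' j).1⟩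
  have hr_box : ∀ j, 0 ≤ r j ∧ r j < n := fun j => by
    have := hr j; have := hp' j; have := hp j; omega
  have hshift_box : ∀ j, 0 ≤ (Pi.single i (p i) + r : Fin d → ℤ) j ∧
      (Pi.single i (p i) + r : Fin d → ℤ) j < n := by
    intro j
    have := hr j; have := hp' j; have := hp i
    rcases eq_or_ne j i with rfl | hj
    · simp only [Pi.add_apply, Pi.single_eq_same]; omega
    · simp only [Pi.add_apply, Pi.single_eq_of_ne hj, zero_add]; omega
  calc y (Pi.single i (p i) + q) = y (Pi.single i (p i) + r) :=
        apply_eq_of_dvd_sub hpy fun j => ⟨q j / p' j, by simp [r, Int.emod_def]⟩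
    _ = x (Pi.single i (p i) + r) := (hxy _ hshift_box).symm
    _ = x r := hpx i r
    _ = y r := hxy r hr_box
    _ = y q := (apply_emod hpy q).symm

lemma eq_of_eqOn_box {x y : (Fin d → ℤ) → A} {p p' : Fin d → ℤ} {m m' n : ℤ}
    (hp : ∀ i, 0 < p i ∧ p i ≤ m) (hp' : ∀ i, 0 < p' i ∧ p' i ≤ m') (hn : m + m' ≤ n)
    (hpx : ∀ i, Pi.single i (p i) ∈ periods x) (hpy : ∀ i, Pi.single i (p' i) ∈ periods y)
    (hxy : ∀ q, (∀ i, 0 ≤ q i ∧ q i < n) → x q = y q) : x = y := by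
  have hpy' := single_mem_periods_of_eqOn_box hp hp' hn hpx hpy hxy
  funext q
  have hr : ∀ j, 0 ≤ q j % p j ∧ q j % p j < n := fun j => by
    have := Int.emod_nonneg (q j) (hp j).1.ne'
    have := Int.emod_lt_of_pos (q j) (hp j).1
    have := hp j; have := hp' j; omega
  rw [apply_emod hpx q, apply_emod hpy' q]
  exact hxy _ hr

lemma IsFiniteOrbit.shiftZd_mem {γ : Set ((Fin d → ℤ) → A)} (hγ : IsFiniteOrbit γ)
    {x : (Fin d → ℤ) → A} (hx : x ∈ γ) (v : Fin d → ℤ) : shiftZd v x ∈ γ := by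
  rw [hγ.2.2 x hx]
  exact ⟨v, rfl⟩

lemma IsFiniteOrbit.exists_single_mem_periods {γ : Set ((Fin d → ℤ) → A)}
    (hγ : IsFiniteOrbit γ) {x : (Fin d → ℤ) → A} (hx : x ∈ γ) (i : Fin d) :
    ∃ p : ℤ, (0 < p ∧ p ≤ γ.ncard) ∧ Pi.single i p ∈ periods x := by
  classical
  have hcard : hγ.1.toFinset.card < (Finset.range (γ.ncard + 1)).card := by
    rw [Finset.card_range, ← Set.ncard_eq_toFinset_card _ hγ.1]
    omega
  obtain ⟨a, ha, b, hb, hab, heq⟩ := Finset.exists_ne_map_eq_of_card_lt_of_maps_to hcard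
    (f := fun k : ℕ => shiftZd (Pi.single i (k : ℤ)) x)
    (fun k _ => hγ.1.mem_toFinset.2 (hγ.shiftZd_mem hx _))
  have hk : Pi.single i ((a : ℤ) - b) ∈ periods x := by
    rw [Pi.single_sub]
    exact sub_mem_periods_of_shiftZd_eq heq
  rw [Finset.mem_range] at ha hb
  refine ⟨|(a : ℤ) - b|, ⟨abs_pos.2 (sub_ne_zero.2 (by exact_mod_cast hab)), ?_⟩, ?_⟩
  · rw [abs_le]
    constructor <;> omega
  · rcases abs_choice ((a : ℤ) - b) with h | h <;> rw [h]
    · exact hk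
    · rw [Pi.single_neg]
      exact neg_mem hk

lemma eqOn_box_of_patternOf_eq {n : ℕ} {x y : (Fin d → ℤ) → A} {v w : Fin d → ℤ}
    (h : patternOf (n := n) x v = patternOf y w) (q : Fin d → ℤ)
    (hq : ∀ i, 0 ≤ q i ∧ q i < n) : shiftZd v x q = shiftZd w y q := by
  have := congrFun h fun i => ⟨(q i).toNat, by have := hq i; omega⟩
  simpa [patternOf, shiftZd, Int.toNat_of_nonneg (hq _).1] using this

lemma IsFiniteOrbit.eq_of_patternOf_eq {n : ℕ} {γ γ' : Set ((Fin d → ℤ) → A)}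
    (hγ : IsFiniteOrbit γ) (hγ' : IsFiniteOrbit γ') (hn : γ.ncard + γ'.ncard ≤ n)
    {x y : (Fin d → ℤ) → A} {v w : Fin d → ℤ} (hx : x ∈ γ) (hy : y ∈ γ')
    (h : patternOf (n := n) x v = patternOf y w) : γ = γ' := by
  have hx' := hγ.shiftZd_mem hx v
  have hy' := hγ'.shiftZd_mem hy w
  choose p hp hpx using hγ.exists_single_mem_periods hx'
  choose p' hp' hpy using hγ'.exists_single_mem_periods hy'
  have hxy : shiftZd v x = shiftZd w y :=
    eq_of_eqOn_box hp hp' (by exact_mod_cast hn) hpx hpy (eqOn_box_of_patternOf_eq h)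
  rw [hγ.2.2 _ hx', hγ'.2.2 _ hy', hxy]

def orbitPatterns (n : ℕ) (γ : Set ((Fin d → ℤ) → A)) : Set ((Fin d → Fin n) → A) :=
  {u | ∃ x ∈ γ, ∃ v, patternOf x v = u}

lemma subset_sftOfOmega_iff {n : ℕ} {γ : Set ((Fin d → ℤ) → A)}
    {ω : ((Fin d → Fin n) → A) → Bool} :
    γ ⊆ sftOfOmega ω ↔ ∀ u ∈ orbitPatterns n γ, ω u = true := by
  constructor
  · rintro h u ⟨x, hx, v, rfl⟩
    exact h hx v
  · intro h x hx v
    exact h _ ⟨x, hx, v, rfl⟩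

lemma patternOf_shiftZd {n : ℕ} (x : (Fin d → ℤ) → A) (v : Fin d → ℤ) :
    patternOf (n := n) (shiftZd v x) 0 = patternOf x v := by
  funext t
  simp [patternOf, shiftZd]

lemma IsFiniteOrbit.ncard_orbitPatterns_le {n : ℕ} {γ : Set ((Fin d → ℤ) → A)}
    (hγ : IsFiniteOrbit γ) : (orbitPatterns n γ).ncard ≤ γ.ncard := by
  have himage : orbitPatterns n γ = (patternOf · 0) '' γ := by
    ext u
    constructor
    · rintro ⟨x, hx, v, rfl⟩
      exact ⟨shiftZd v x, hγ.shiftZd_mem hx v, patternOf_shiftZd x v⟩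
    · rintro ⟨x, hx, rfl⟩
      exact ⟨x, hx, 0, rfl⟩
  rw [himage]
  exact Set.ncard_image_le hγ.1

lemma IsFiniteOrbit.disjoint_orbitPatterns {n : ℕ} {γ γ' : Set ((Fin d → ℤ) → A)}
    (hγ : IsFiniteOrbit γ) (hγ' : IsFiniteOrbit γ') (hn : γ.ncard + γ'.ncard ≤ n)
    (hne : γ ≠ γ') : Disjoint (orbitPatterns n γ) (orbitPatterns n γ') := by
  rw [Set.disjoint_left]
  rintro _ ⟨x, hx, v, rfl⟩ ⟨y, hy, w, h⟩
  exact hne (hγ.eq_of_patternOf_eq hγ' hn hx hy h.symm)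

lemma finite_setOf_isFiniteOrbit_two_mul_ncard_le [Finite A] (n : ℕ) :
    {γ : Set ((Fin d → ℤ) → A) | IsFiniteOrbit γ ∧ 2 * γ.ncard ≤ n}.Finite := by
  refine Set.Finite.of_finite_image (f := orbitPatterns n) (Set.toFinite _) ?_
  intro γ hγ γ' hγ' h
  by_contra hne
  have hn : γ.ncard + γ'.ncard ≤ n := by
    have := hγ.2
    have := hγ'.2
    omega
  obtain ⟨x, hx⟩ := hγ.1.2.1
  have hu : patternOf x 0 ∈ orbitPatterns n γ := ⟨x, hx, 0, rfl⟩
  exact Set.disjoint_left.1 (hγ.1.disjoint_orbitPatterns hγ'.1 hn hne) hu (h ▸ hu)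

end FiniteOrbits

section Independence

open ProbabilityTheory

lemma ProbabilityTheory.iIndep.measure_biInter_eq_prod {Ω ι J : Type*} {mΩ : MeasurableSpace Ω}
    {μ : Measure Ω} {m : ι → MeasurableSpace Ω} (h_le : ∀ i, m i ≤ mΩ) (h : iIndep m μ)
    (S : Finset J) {W : J → Set ι} (hW : (S : Set J).PairwiseDisjoint W) {B : J → Set Ω}
    (hB : ∀ j ∈ S, MeasurableSet[⨆ i ∈ W j, m i] (B j)) :
    μ (⋂ j ∈ S, B j) = ∏ j ∈ S, μ (B j) := by
  classical
  have := h.isProbabilityMeasure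
  induction S using Finset.induction_on with
  | empty => simp
  | insert j S hj ih =>
    have hdisj : Disjoint (W j) (⋃ k ∈ S, W k) :=
      Set.disjoint_iUnion₂_right.2 fun k hk =>
        hW (Finset.mem_insert_self j S) (Finset.mem_insert_of_mem hk)
          (ne_of_mem_of_not_mem hk hj).symm
    have hrest : MeasurableSet[⨆ i ∈ ⋃ k ∈ S, W k, m i] (⋂ k ∈ S, B k) :=
      MeasurableSet.biInter S.countable_toSet fun k hk => by
        have hle : ⨆ i ∈ W k, m i ≤ ⨆ i ∈ ⋃ k ∈ S, W k, m i :=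
          biSup_mono fun i hi => Set.mem_biUnion hk hi
        exact hle _ (hB k (Finset.mem_insert_of_mem hk))
    rw [Finset.set_biInter_insert, Finset.prod_insert hj,
      (Indep_iff _ _ _).1 (indep_iSup_of_disjoint h_le h hdisj) _ _
        (hB j (Finset.mem_insert_self j S)) hrest,
      ih (hW.subset (by simp)) fun k hk => hB k (Finset.mem_insert_of_mem hk)]

lemma measure_pi_forall_eq_true {I : Type*} [Fintype I] (ν : Measure Bool)
    [IsProbabilityMeasure ν] (W : Set I) :
    Measure.pi (fun _ : I => ν) {ω | ∀ u ∈ W, ω u = true} = ν {true} ^ W.ncard := by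
  classical
  have hindep : iIndepFun (fun u (ω : I → Bool) => ω u) (Measure.pi fun _ => ν) :=
    iIndepFun_pi (X := fun _ => id) fun _ => aemeasurable_id
  have hset : {ω : I → Bool | ∀ u ∈ W, ω u = true} = ⋂ u ∈ W.toFinset, (· u) ⁻¹' {true} := by
    ext ω
    simp
  rw [hset, hindep.meas_biInter fun u _ => ⟨{true}, measurableSet_singleton _, rfl⟩,
    Set.ncard_eq_toFinset_card', ← Finset.prod_const]
  refine Finset.prod_congr rfl fun u _ => ?_
  exact (measurePreserving_eval _ u).measure_preimage (measurableSet_singleton _).nullMeasurableSet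

lemma measure_pi_biInter_not_forall_eq_true {I J : Type*} [Fintype I] (ν : Measure Bool)
    [IsProbabilityMeasure ν] (S : Finset J) {W : J → Set I} (hW : (S : Set J).PairwiseDisjoint W) :
    Measure.pi (fun _ : I => ν) (⋂ j ∈ S, {ω | ∀ u ∈ W j, ω u = true}ᶜ) =
      ∏ j ∈ S, (1 - ν {true} ^ (W j).ncard) := by
  have hindep : iIndep (fun u => MeasurableSpace.comap (fun ω : I → Bool => ω u) inferInstance)
      (Measure.pi fun _ => ν) :=
    (iIndepFun_iff_iIndep _ _ _).1 (iIndepFun_pi (X := fun _ => id) fun _ => aemeasurable_id)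
  rw [hindep.measure_biInter_eq_prod (fun u => (measurable_pi_apply u).comap_le) S hW]
  · refine Finset.prod_congr rfl fun j _ => ?_
    rw [measure_compl (Set.toFinite _).measurableSet (measure_ne_top _ _), measure_univ,
      measure_pi_forall_eq_true]
  · intro j _
    refine MeasurableSet.compl ?_
    have hset : {ω : I → Bool | ∀ u ∈ W j, ω u = true} = ⋂ u ∈ W j, (· u) ⁻¹' {true} := by
      ext ω
      simp
    rw [hset]
    exact MeasurableSet.biInter (W j).to_countable fun u hu =>
      le_biSup (fun i => MeasurableSpace.comap (fun ω : I → Bool => ω i) inferInstance) hu _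
        ⟨{true}, measurableSet_singleton _, rfl⟩

lemma PMF.toMeasure_bernoulli_true (p : NNReal) (h : p ≤ 1) :
    (PMF.bernoulli p h).toMeasure {true} = p := by
  rw [PMF.toMeasure_apply_singleton _ _ (measurableSet_singleton _), PMF.bernoulli_apply]
  rfl

end Independence

theorem stmt15_general {A : Type*} [Fintype A] [DecidableEq A] (d n : ℕ)
    (α : ENNReal) (hα : α ≤ 1) :
    bernoulliProd A d n α hα
        {ω | ∀ γ : Set ((Fin d → ℤ) → A), IsFiniteOrbit γ → ¬ γ ⊆ sftOfOmega ω} ≤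
      ∏ᶠ γ ∈ {γ : Set ((Fin d → ℤ) → A) | IsFiniteOrbit γ ∧ 2 * γ.ncard ≤ n},
        (1 - α ^ γ.ncard) := by
  have hS := finite_setOf_isFiniteOrbit_two_mul_ncard_le (A := A) (d := d) n
  have hdisj : (hS.toFinset : Set (Set ((Fin d → ℤ) → A))).PairwiseDisjoint (orbitPatterns n) := by
    intro γ hγ γ' hγ' hne
    rw [Set.Finite.coe_toFinset] at hγ hγ'
    exact hγ.1.disjoint_orbitPatterns hγ'.1 (by have := hγ.2; have := hγ'.2; omega) hne
  rw [finprod_mem_eq_finite_toFinset_prod _ hS]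
  calc _ ≤ bernoulliProd A d n α hα
        (⋂ γ ∈ hS.toFinset, {ω | ∀ u ∈ orbitPatterns n γ, ω u = true}ᶜ) :=
        measure_mono fun ω hω => by
          simp only [Set.mem_iInter, Set.mem_compl_iff]
          exact fun γ hγ hall => hω γ (hS.mem_toFinset.1 hγ).1 (subset_sftOfOmega_iff.2 hall)
    _ = ∏ γ ∈ hS.toFinset, (1 - α ^ (orbitPatterns n γ).ncard) := by
        rw [bernoulliProd, measure_pi_biInter_not_forall_eq_true _ _ hdisj]
        congr! 4
        exact (PMF.toMeasure_bernoulli_true _ _).trans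
          (ENNReal.coe_toNNReal (ne_top_of_le_ne_top ENNReal.one_ne_top hα))
    _ ≤ ∏ γ ∈ hS.toFinset, (1 - α ^ γ.ncard) :=
        Finset.prod_le_prod' fun γ hγ => tsub_le_tsub_left
          (pow_le_pow_of_le_one zero_le hα (hS.mem_toFinset.1 hγ).1.ncard_orbitPatterns_le) 1

/-- The probability that the random `ℤ^d`-SFT `X_ω` contains no finite orbit is at most
the product over finite orbits `γ` of the full shift with `|γ| ≤ n/2` of `(1 − α^|γ|)`. -/
theorem stmt15 {A : Type*} [Fintype A] [DecidableEq A] (d n : ℕ) (hd : 1 ≤ d) (hn : 1 ≤ n)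
    (α : ENNReal) (hα : α ≤ 1) :
    bernoulliProd A d n α hα
        {ω | ∀ γ : Set ((Fin d → ℤ) → A), IsFiniteOrbit γ → ¬ γ ⊆ sftOfOmega ω} ≤
      ∏ᶠ γ ∈ {γ : Set ((Fin d → ℤ) → A) | IsFiniteOrbit γ ∧ 2 * γ.ncard ≤ n},
        (1 - α ^ γ.ncard) :=
  stmt15_general d n α hα
end
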